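/- arXiv:1906.11991 — 2 statements merged into one kernel-verified Lean document; each statement's English description precedes it below -/
import Mathlib

section
/- Let a, b, λ, q be complex numbers with |q| < 1 and 1 + bq^j ≠ 0 for all integers j ≥ 1, and suppose G(aq, b, λq) ≠ 0. Then the continued fraction with b₀ = 1, all partial denominators bₙ = 1 (n ≥ 1), and partial numerators a_{2n-1} = aqⁿ + λq^{2n-1} and a_{2n} = bqⁿ + λq^{2n} (n ≥ 1) converges to G(a, b, λ) / G(aq, b, λq); that is, the approximants Aₙ/Bₙ tend to G(a,b,λ)/G(aq,b,λq) as n → ∞. -/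
/-!
Put `g n := G(a q^⌈n/2⌉, b q^⌊n/2⌋, λ q^n) / ∏_{j<⌊n/2⌋} (1 + b q^(j+1))`. Ramanujan's two
q-difference equations

  `G(a,b,λ) = G(aq,b,λq) + q(a+λ)/(1+bq) · G(aq,bq,λq²)`,
  `(1+bq) G(a,b,λ) = G(a,bq,λq) + (b+λ)q · G(aq,bq,λq²)`

(compare the series termwise) say that `g n = g (n+1) + aₙ₊₁ g (n+2)`. Hence, for any solution
`X` of the recurrence `X (n+2) = X (n+1) + aₙ₊₁ X n` of the convergents, the quantity
`X (n+1) g (n+1) + aₙ₊₁ X n g (n+2)` does not depend on `n`: it is `g 0` for the numerators and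
`g 1` for the denominators. Since `∑ |aₙ| < ∞` the convergents are bounded, and `g` is bounded
because the `G`-factor tends to `1` while the products stay away from `0`. So
`Aₙ g (n+1) → g 0` and `Bₙ g (n+1) → g 1`, and `Aₙ / Bₙ → g 0 / g 1`.
-/

/-- Numerator convergents: `cfNum a b (n+1)` is `Aₙ`, with `A₋₁ = cfNum a b 0 = 1`. -/
noncomputable def cfNum (a b : ℕ → ℂ) : ℕ → ℂ
  | 0 => 1
  | 1 => b 0
  | n + 2 => b (n + 1) * cfNum a b (n + 1) + a (n + 1) * cfNum a b n

/-- Denominator convergents: `cfDen a b (n+1)` is `Bₙ`, with `B₋₁ = cfDen a b 0 = 0`. -/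
noncomputable def cfDen (a b : ℕ → ℂ) : ℕ → ℂ
  | 0 => 0
  | 1 => 1
  | n + 2 => b (n + 1) * cfDen a b (n + 1) + a (n + 1) * cfDen a b n

/-- The continued fraction `b₀ + K(aₙ/bₙ)` converges to `f`: the approximants
`Aₙ/Bₙ` tend to `f` as `n → ∞`. -/
def CFConvergesTo (a b : ℕ → ℂ) (f : ℂ) : Prop :=
  Filter.Tendsto (fun n => cfNum a b (n + 1) / cfDen a b (n + 1)) Filter.atTop (nhds f)

/-- Ramanujan's function `G(a, b, λ) = G(a, λ; b; q)`. -/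
noncomputable def G (q a b l : ℂ) : ℂ :=
  ∑' n : ℕ, q ^ (n * (n + 1) / 2) * (∏ k ∈ Finset.range n, (a + l * q ^ k)) /
    ((∏ j ∈ Finset.range n, (1 - q ^ (j + 1))) * ∏ j ∈ Finset.range n, (1 + b * q ^ (j + 1)))

open Filter Finset Topology

noncomputable def gTerm (q A B L : ℂ) (n : ℕ) : ℂ :=
  q ^ (n * (n + 1) / 2) * (∏ k ∈ range n, (A + L * q ^ k)) /
    ((∏ j ∈ range n, (1 - q ^ (j + 1))) * ∏ j ∈ range n, (1 + B * q ^ (j + 1)))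

section Terms
variable (q A B L : ℂ)

@[simp]
theorem gTerm_zero : gTerm q A B L 0 = 1 := by simp [gTerm]

theorem succ_mul_succ_succ_div_two (n : ℕ) :
    (n + 1) * (n + 1 + 1) / 2 = n * (n + 1) / 2 + (n + 1) := by
  rw [show (n + 1) * (n + 1 + 1) = n * (n + 1) + 2 * (n + 1) by ring,
    Nat.add_mul_div_left _ _ two_pos]

theorem gTerm_succ (n : ℕ) :
    gTerm q A B L (n + 1) =
      q ^ (n + 1) * (A + L * q ^ n) / ((1 - q ^ (n + 1)) * (1 + B * q ^ (n + 1))) *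
        gTerm q A B L n := by
  simp only [gTerm, prod_range_succ, succ_mul_succ_succ_div_two, pow_add, div_eq_mul_inv, mul_inv]
  ring

theorem gTerm_succ' (n : ℕ) :
    gTerm q A B L (n + 1) =
      q * (A + L) / ((1 - q ^ (n + 1)) * (1 + B * q)) * gTerm q (A * q) (B * q) (L * q ^ 2) n := by
  have hnum : ∏ k ∈ range n, (A * q + L * q ^ 2 * q ^ k) =
      q ^ n * ∏ k ∈ range n, (A + L * q ^ (k + 1)) := by
    rw [prod_congr rfl fun k _ =>
        show A * q + L * q ^ 2 * q ^ k = q * (A + L * q ^ (k + 1)) by ring,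
      prod_mul_distrib, prod_const, card_range]
  rw [gTerm, gTerm, hnum, prod_range_succ' (fun k => A + L * q ^ k),
    prod_range_succ' (fun j => 1 + B * q ^ (j + 1)), prod_range_succ (fun j => 1 - q ^ (j + 1)),
    succ_mul_succ_succ_div_two]
  simp only [pow_add, div_eq_mul_inv, mul_inv]
  ring_nf

theorem gTerm_mul_q (n : ℕ) : gTerm q (A * q) B (L * q) n = q ^ n * gTerm q A B L n := by
  have hnum : ∏ k ∈ range n, (A * q + L * q * q ^ k) = q ^ n * ∏ k ∈ range n, (A + L * q ^ k) := by
    rw [prod_congr rfl fun k _ => show A * q + L * q * q ^ k = q * (A + L * q ^ k) by ring,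
      prod_mul_distrib, prod_const, card_range]
  rw [gTerm, gTerm, hnum]
  ring

theorem summable_gTerm (hq : ‖q‖ < 1) : Summable (gTerm q A B L) := by
  have hpow := tendsto_pow_atTop_nhds_zero_of_norm_lt_one hq
  have hpow' : Tendsto (fun n => q ^ (n + 1)) atTop (𝓝 0) := hpow.comp (tendsto_add_atTop_nat 1)
  have hratio : Tendsto (fun n => q ^ (n + 1) * (A + L * q ^ n) /
      ((1 - q ^ (n + 1)) * (1 + B * q ^ (n + 1)))) atTop (𝓝 0) := by
    convert (hpow'.mul ((tendsto_const_nhds (x := A)).add (hpow.const_mul L))).div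
      ((tendsto_const_nhds.sub hpow').mul (tendsto_const_nhds.add (hpow'.const_mul B)))
      (by simp : (1 - (0:ℂ)) * (1 + B * 0) ≠ 0) using 1
    exacts [rfl, by simp]
  refine .of_norm (summable_of_ratio_norm_eventually_le (r := 1 / 2) (by norm_num) ?_)
  filter_upwards [hratio.norm.eventually (eventually_le_nhds (by norm_num : ‖(0 : ℂ)‖ < 1 / 2))]
    with n hn
  rw [norm_norm, norm_norm, gTerm_succ, norm_mul]
  exact mul_le_mul_of_nonneg_right hn (norm_nonneg _)

theorem hasSum_gTerm (hq : ‖q‖ < 1) : HasSum (gTerm q A B L) (G q A B L) :=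
  (summable_gTerm q A B L hq).hasSum

end Terms

theorem one_sub_pow_succ_ne_zero {q : ℂ} (hq : ‖q‖ < 1) (n : ℕ) : 1 - q ^ (n + 1) ≠ 0 := by
  have : ‖q ^ (n + 1)‖ < 1 := by
    rw [norm_pow]; exact pow_lt_one₀ (norm_nonneg _) hq n.succ_ne_zero
  intro h
  rw [← eq_of_sub_eq_zero h, norm_one] at this
  exact this.false

section Identities
variable {q : ℂ} (a b l : ℂ)

theorem gTerm_succ_sub_gTerm_mul_q (hq : ‖q‖ < 1) (n : ℕ) :
    gTerm q a b l (n + 1) - gTerm q (a * q) b (l * q) (n + 1) =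
      q * (a + l) / (1 + b * q) * gTerm q (a * q) (b * q) (l * q ^ 2) n := by
  have := one_sub_pow_succ_ne_zero hq n
  rw [gTerm_mul_q, gTerm_succ']
  field_simp

theorem one_add_mul_gTerm_succ (hq : ‖q‖ < 1) (hb : ∀ j : ℕ, 1 ≤ j → 1 + b * q ^ j ≠ 0)
    (n : ℕ) :
    (1 + b * q) * gTerm q a b l (n + 1) =
      gTerm q a (b * q) (l * q) (n + 1) + b * q * gTerm q (a * q) (b * q) (l * q ^ 2) (n + 1) +
        l * q * gTerm q (a * q) (b * q) (l * q ^ 2) n := by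
  have h1 : 1 + b * q ≠ 0 := by simpa using hb 1 le_rfl
  have h2 : 1 + b * q * q ^ (n + 1) ≠ 0 := by
    simpa [mul_assoc, ← pow_succ'] using hb (n + 2) (by omega)
  have h3 := one_sub_pow_succ_ne_zero hq n
  rw [gTerm_succ' q a b l, gTerm_succ q a (b * q), gTerm_succ q (a * q) (b * q),
    show l * q ^ 2 = l * q * q by ring, gTerm_mul_q]
  field_simp
  ring

theorem G_eq_add (hq : ‖q‖ < 1) :
    G q a b l =
      G q (a * q) b (l * q) + q * (a + l) / (1 + b * q) * G q (a * q) (b * q) (l * q ^ 2) := by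
  have hs := (hasSum_gTerm q a b l hq).sub (hasSum_gTerm q (a * q) b (l * q) hq)
  have hshift : HasSum (fun n => gTerm q a b l n - gTerm q (a * q) b (l * q) n)
      (q * (a + l) / (1 + b * q) * G q (a * q) (b * q) (l * q ^ 2)) := by
    refine (hasSum_nat_add_iff' 1).mp ?_
    simpa using ((hasSum_gTerm q (a * q) (b * q) (l * q ^ 2) hq).mul_left _).congr_fun
      (gTerm_succ_sub_gTerm_mul_q a b l hq)
  linear_combination hs.unique hshift

theorem one_add_mul_G (hq : ‖q‖ < 1) (hb : ∀ j : ℕ, 1 ≤ j → 1 + b * q ^ j ≠ 0) :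
    (1 + b * q) * G q a b l =
      G q a (b * q) (l * q) + (b + l) * q * G q (a * q) (b * q) (l * q ^ 2) := by
  have hs := (((hasSum_gTerm q a b l hq).mul_left (1 + b * q)).sub
    (hasSum_gTerm q a (b * q) (l * q) hq)).sub
    ((hasSum_gTerm q (a * q) (b * q) (l * q ^ 2) hq).mul_left (b * q))
  have hshift : HasSum (fun n => (1 + b * q) * gTerm q a b l n - gTerm q a (b * q) (l * q) n -
      b * q * gTerm q (a * q) (b * q) (l * q ^ 2) n) (l * q * G q (a * q) (b * q) (l * q ^ 2)) := by
    refine (hasSum_nat_add_iff' 1).mp ?_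
    simpa using ((hasSum_gTerm q (a * q) (b * q) (l * q ^ 2) hq).mul_left _).congr_fun
      fun n => by rw [one_add_mul_gTerm_succ a b l hq hb]; ring
  linear_combination hs.unique hshift

end Identities

theorem exists_pos_le_prod_norm_one_add {ι R : Type*} [NormedCommRing R] [NormOneClass R]
    {u : ι → R} (hu : Summable (‖u ·‖)) (h : ∀ i, 1 + u i ≠ 0) :
    ∃ c > 0, ∀ s : Finset ι, c ≤ ∏ i ∈ s, ‖1 + u i‖ := by
  have hlog := hu.summable_log_norm_one_add.abs
  refine ⟨Real.exp (-∑' i, |Real.log ‖1 + u i‖|), Real.exp_pos _, fun s => ?_⟩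
  rw [← prod_congr rfl fun i _ => Real.exp_log (norm_pos_iff.2 (h i)), ← Real.exp_sum]
  gcongr
  calc -∑' i, |Real.log ‖1 + u i‖| ≤ -∑ i ∈ s, |Real.log ‖1 + u i‖| :=
        neg_le_neg (hlog.sum_le_tsum s fun _ _ => abs_nonneg _)
    _ ≤ ∑ i ∈ s, Real.log ‖1 + u i‖ := by
        rw [← sum_neg_distrib]; exact sum_le_sum fun _ _ => neg_abs_le _

section Bounds
variable {q : ℂ}

theorem norm_gTerm_le (hq : ‖q‖ ≤ 1) (A B L : ℂ) {c : ℝ} (hc : 0 < c)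
    (hden : ∀ n, c ≤ (∏ j ∈ range n, ‖1 - q ^ (j + 1)‖) * ∏ j ∈ range n, ‖1 + B * q ^ (j + 1)‖)
    (n : ℕ) : ‖gTerm q A B L n‖ ≤ (‖q‖ * (‖A‖ + ‖L‖)) ^ n / c := by
  have hexp : n ≤ n * (n + 1) / 2 := by
    rw [Nat.le_div_iff_mul_le two_pos]
    rcases n with _ | n
    · simp
    · exact Nat.mul_le_mul_left _ (by omega)
  have hfactor : ∀ k, ‖A + L * q ^ k‖ ≤ ‖A‖ + ‖L‖ := fun k => by
    calc ‖A + L * q ^ k‖ ≤ ‖A‖ + ‖L‖ * ‖q‖ ^ k := by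
          rw [← norm_pow, ← norm_mul]; exact norm_add_le _ _
      _ ≤ ‖A‖ + ‖L‖ := by
          gcongr; exact mul_le_of_le_one_right (norm_nonneg _) (pow_le_one₀ (norm_nonneg _) hq)
  rw [gTerm, norm_div, norm_mul, norm_mul, norm_prod, norm_prod, norm_prod, mul_pow]
  refine div_le_div₀ (by positivity) (mul_le_mul ?_ ?_ (by positivity) (by positivity)) hc (hden n)
  · rw [norm_pow]; exact pow_le_pow_of_le_one (norm_nonneg _) hq hexp
  · calc ∏ k ∈ range n, ‖A + L * q ^ k‖ ≤ ∏ k ∈ range n, (‖A‖ + ‖L‖) :=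
          prod_le_prod (fun _ _ => norm_nonneg _) fun k _ => hfactor k
      _ = (‖A‖ + ‖L‖) ^ n := by rw [prod_const, card_range]

theorem norm_G_sub_one_le (hq : ‖q‖ < 1) (A B L : ℂ) {c : ℝ} (hc : 0 < c)
    (hden : ∀ n, c ≤ (∏ j ∈ range n, ‖1 - q ^ (j + 1)‖) * ∏ j ∈ range n, ‖1 + B * q ^ (j + 1)‖)
    (hr : ‖q‖ * (‖A‖ + ‖L‖) < 1) :
    ‖G q A B L - 1‖ ≤ ‖q‖ * (‖A‖ + ‖L‖) / c * (1 - ‖q‖ * (‖A‖ + ‖L‖))⁻¹ := by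
  set r := ‖q‖ * (‖A‖ + ‖L‖)
  have htail : HasSum (fun n => gTerm q A B L (n + 1)) (G q A B L - 1) := by
    simpa using (hasSum_nat_add_iff' 1).mpr (hasSum_gTerm q A B L hq)
  refine htail.norm_le_of_bounded
    ((hasSum_geometric_of_lt_one (by positivity) hr).mul_left (r / c)) fun n => ?_
  calc ‖gTerm q A B L (n + 1)‖ ≤ r ^ (n + 1) / c := norm_gTerm_le hq.le A B L hc hden (n + 1)
    _ = r / c * r ^ n := by ring

end Bounds

section ContinuedFraction

theorem cfNum_add_two (c : ℕ → ℂ) (n : ℕ) :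
    cfNum c (fun _ => 1) (n + 2) =
      cfNum c (fun _ => 1) (n + 1) + c (n + 1) * cfNum c (fun _ => 1) n := by
  rw [cfNum, one_mul]

theorem cfDen_add_two (c : ℕ → ℂ) (n : ℕ) :
    cfDen c (fun _ => 1) (n + 2) =
      cfDen c (fun _ => 1) (n + 1) + c (n + 1) * cfDen c (fun _ => 1) n := by
  rw [cfDen, one_mul]

variable {c g X : ℕ → ℂ}

theorem norm_le_exp_tsum_of_recurrence (hc : Summable (‖c ·‖)) (h0 : ‖X 0‖ ≤ 1) (h1 : ‖X 1‖ ≤ 1)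
    (hX : ∀ n, X (n + 2) = X (n + 1) + c (n + 1) * X n) (n : ℕ) :
    ‖X n‖ ≤ Real.exp (∑' j, ‖c j‖) := by
  let S n := ∑ j ∈ range n, ‖c (j + 1)‖
  have key : ∀ n, ‖X n‖ ≤ Real.exp (S n) ∧ ‖X (n + 1)‖ ≤ Real.exp (S n) := by
    intro n
    induction n with
    | zero => simpa [S] using ⟨h0, h1⟩
    | succ n ih =>
      have hS : Real.exp (S (n + 1)) = Real.exp ‖c (n + 1)‖ * Real.exp (S n) := by
        simp only [S, sum_range_succ, Real.exp_add, mul_comm]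
      refine ⟨ih.2.trans ?_, ?_⟩
      · rw [hS]
        exact le_mul_of_one_le_left (Real.exp_nonneg _) (Real.one_le_exp (norm_nonneg _))
      calc ‖X (n + 2)‖ ≤ ‖X (n + 1)‖ + ‖c (n + 1)‖ * ‖X n‖ := by
            rw [hX, ← norm_mul]; exact norm_add_le _ _
        _ ≤ (‖c (n + 1)‖ + 1) * Real.exp (S n) := by
            nlinarith [ih.1, ih.2, norm_nonneg (c (n + 1))]
        _ ≤ Real.exp (S (n + 1)) := by
            rw [hS]; gcongr; exact Real.add_one_le_exp _
  calc ‖X n‖ ≤ Real.exp (S n) := (key n).1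
    _ ≤ Real.exp (∑' j, ‖c j‖) := by
      gcongr
      calc S n ≤ ∑ j ∈ range (n + 1), ‖c j‖ := by
            rw [sum_range_succ']; exact le_add_of_nonneg_right (norm_nonneg _)
        _ ≤ ∑' j, ‖c j‖ := hc.sum_le_tsum _ fun _ _ => norm_nonneg _

theorem mul_tail_add_eq_of_recurrence (hg : ∀ n, g n = g (n + 1) + c (n + 1) * g (n + 2))
    (hX : ∀ n, X (n + 2) = X (n + 1) + c (n + 1) * X n) (n : ℕ) :
    X (n + 1) * g (n + 1) + c (n + 1) * X n * g (n + 2) = X 1 * g 1 + c 1 * X 0 * g 2 := by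
  induction n with
  | zero => rfl
  | succ n ih =>
    rw [hX]
    linear_combination ih - X (n + 1) * hg (n + 1)

theorem tendsto_mul_tail_of_recurrence (hc : Summable (‖c ·‖))
    (hg : ∀ n, g n = g (n + 1) + c (n + 1) * g (n + 2))
    (hcg : Tendsto (fun n => c (n + 1) * g (n + 2)) atTop (𝓝 0))
    (h0 : ‖X 0‖ ≤ 1) (h1 : ‖X 1‖ ≤ 1) (hX : ∀ n, X (n + 2) = X (n + 1) + c (n + 1) * X n) :
    Tendsto (fun n => X (n + 1) * g (n + 1)) atTop (𝓝 (X 1 * g 1 + c 1 * X 0 * g 2)) := by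
  have hbdd : IsBoundedUnder (· ≤ ·) atTop (norm ∘ X) :=
    isBoundedUnder_of ⟨_, norm_le_exp_tsum_of_recurrence hc h0 h1 hX⟩
  have := (tendsto_const_nhds (x := X 1 * g 1 + c 1 * X 0 * g 2)).sub
    (hcg.zero_mul_isBoundedUnder_le hbdd)
  rw [sub_zero] at this
  refine this.congr fun n => ?_
  linear_combination -mul_tail_add_eq_of_recurrence hg hX n

theorem cfConvergesTo_of_tail (hc : Summable (‖c ·‖))
    (hg : ∀ n, g n = g (n + 1) + c (n + 1) * g (n + 2))
    (hcg : Tendsto (fun n => c (n + 1) * g (n + 2)) atTop (𝓝 0))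
    (hne : ∀ᶠ n in atTop, g n ≠ 0) (h1 : g 1 ≠ 0) :
    CFConvergesTo c (fun _ => 1) (g 0 / g 1) := by
  have hA := tendsto_mul_tail_of_recurrence hc hg hcg (X := cfNum c (fun _ => 1))
    (by simp [cfNum]) (by simp [cfNum]) (cfNum_add_two c)
  have hB := tendsto_mul_tail_of_recurrence hc hg hcg (X := cfDen c (fun _ => 1))
    (by simp [cfDen]) (by simp [cfDen]) (cfDen_add_two c)
  have hg0 : g 0 = g 1 + c 1 * g 2 := hg 0
  rw [show cfNum c (fun _ => 1) 1 = 1 from rfl, show cfNum c (fun _ => 1) 0 = 1 from rfl, one_mul,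
    mul_one, ← hg0] at hA
  rw [show cfDen c (fun _ => 1) 1 = 1 from rfl, show cfDen c (fun _ => 1) 0 = 0 from rfl, one_mul,
    mul_zero, zero_mul, add_zero] at hB
  refine (hA.div hB h1).congr' ?_
  filter_upwards [(tendsto_add_atTop_nat 1).eventually hne] with n hn
  exact mul_div_mul_right _ _ hn

end ContinuedFraction

section Ramanujan
variable {q : ℂ} (a b l : ℂ)

theorem exists_pos_le_prod_norm_one_add_mul_pow (hq : ‖q‖ < 1)
    (hb : ∀ j : ℕ, 1 ≤ j → 1 + b * q ^ j ≠ 0) :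
    ∃ c > 0, ∀ t k : ℕ, c ≤ ∏ j ∈ range k, ‖1 + b * q ^ (t + j + 1)‖ := by
  have hu : Summable fun j : ℕ => ‖b * q ^ (j + 1)‖ := by
    simpa [norm_mul] using
      (summable_nat_add_iff 1).mpr ((summable_norm_geometric_of_norm_lt_one hq).mul_left ‖b‖)
  obtain ⟨c, hc, hprod⟩ := exists_pos_le_prod_norm_one_add hu fun j => hb (j + 1) (by omega)
  refine ⟨c, hc, fun t k => ?_⟩
  simpa [prod_map, add_assoc] using hprod ((range k).map (addLeftEmbedding t))

noncomputable def ramanujanNumer (q a b l : ℂ) (m : ℕ) : ℂ :=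
  if m % 2 = 1 then a * q ^ ((m + 1) / 2) + l * q ^ m else b * q ^ (m / 2) + l * q ^ m

noncomputable def ramanujanTail (q a b l : ℂ) (n : ℕ) : ℂ :=
  G q (a * q ^ ((n + 1) / 2)) (b * q ^ (n / 2)) (l * q ^ n) /
    ∏ j ∈ range (n / 2), (1 + b * q ^ (j + 1))

theorem ramanujanNumer_two_mul_add_one (t : ℕ) :
    ramanujanNumer q a b l (2 * t + 1) = a * q ^ (t + 1) + l * q ^ (2 * t + 1) := by
  rw [ramanujanNumer, if_pos (by omega), show (2 * t + 1 + 1) / 2 = t + 1 by omega]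

theorem ramanujanNumer_two_mul_add_two (t : ℕ) :
    ramanujanNumer q a b l (2 * (t + 1)) = b * q ^ (t + 1) + l * q ^ (2 * (t + 1)) := by
  rw [ramanujanNumer, if_neg (by omega), show 2 * (t + 1) / 2 = t + 1 by omega]

theorem ramanujanTail_two_mul (t : ℕ) :
    ramanujanTail q a b l (2 * t) =
      G q (a * q ^ t) (b * q ^ t) (l * q ^ (2 * t)) / ∏ j ∈ range t, (1 + b * q ^ (j + 1)) := by
  rw [ramanujanTail, show (2 * t + 1) / 2 = t by omega, show 2 * t / 2 = t by omega]

theorem ramanujanTail_two_mul_add_one (t : ℕ) :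
    ramanujanTail q a b l (2 * t + 1) =
      G q (a * q ^ (t + 1)) (b * q ^ t) (l * q ^ (2 * t + 1)) /
        ∏ j ∈ range t, (1 + b * q ^ (j + 1)) := by
  rw [ramanujanTail, show (2 * t + 1 + 1) / 2 = t + 1 by omega, show (2 * t + 1) / 2 = t by omega]

theorem ramanujanTail_two_mul_eq (hq : ‖q‖ < 1) (t : ℕ) :
    ramanujanTail q a b l (2 * t) = ramanujanTail q a b l (2 * t + 1) +
      ramanujanNumer q a b l (2 * t + 1) * ramanujanTail q a b l (2 * (t + 1)) := by
  have h := G_eq_add (a * q ^ t) (b * q ^ t) (l * q ^ (2 * t)) hq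
  rw [show a * q ^ t * q = a * q ^ (t + 1) by ring,
    show l * q ^ (2 * t) * q = l * q ^ (2 * t + 1) by ring,
    show b * q ^ t * q = b * q ^ (t + 1) by ring,
    show l * q ^ (2 * t) * q ^ 2 = l * q ^ (2 * (t + 1)) by ring] at h
  rw [ramanujanTail_two_mul, ramanujanTail_two_mul_add_one, ramanujanTail_two_mul,
    ramanujanNumer_two_mul_add_one, prod_range_succ, h]
  simp only [div_eq_mul_inv, mul_inv]
  ring

theorem ramanujanTail_two_mul_add_one_eq (hq : ‖q‖ < 1)
    (hb : ∀ j : ℕ, 1 ≤ j → 1 + b * q ^ j ≠ 0) (t : ℕ) :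
    ramanujanTail q a b l (2 * t + 1) = ramanujanTail q a b l (2 * (t + 1)) +
      ramanujanNumer q a b l (2 * (t + 1)) * ramanujanTail q a b l (2 * (t + 1) + 1) := by
  have hb' : ∀ j : ℕ, 1 ≤ j → 1 + b * q ^ t * q ^ j ≠ 0 := fun j hj => by
    rw [mul_assoc, ← pow_add]; exact hb _ (by omega)
  have h := one_add_mul_G (a * q ^ (t + 1)) (b * q ^ t) (l * q ^ (2 * t + 1)) hq hb'
  rw [show b * q ^ t * q = b * q ^ (t + 1) by ring,
    show l * q ^ (2 * t + 1) * q = l * q ^ (2 * (t + 1)) by ring,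
    show a * q ^ (t + 1) * q = a * q ^ (t + 1 + 1) by ring,
    show l * q ^ (2 * t + 1) * q ^ 2 = l * q ^ (2 * (t + 1) + 1) by ring] at h
  rw [ramanujanTail_two_mul_add_one, ramanujanTail_two_mul, ramanujanTail_two_mul_add_one,
    ramanujanNumer_two_mul_add_two, prod_range_succ,
    ← mul_div_mul_left _ _ (hb (t + 1) (by omega)), h]
  simp only [div_eq_mul_inv, mul_inv]
  ring

theorem ramanujanTail_eq (hq : ‖q‖ < 1) (hb : ∀ j : ℕ, 1 ≤ j → 1 + b * q ^ j ≠ 0) (n : ℕ) :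
    ramanujanTail q a b l n = ramanujanTail q a b l (n + 1) +
      ramanujanNumer q a b l (n + 1) * ramanujanTail q a b l (n + 2) := by
  obtain ⟨t, rfl | rfl⟩ := Nat.even_or_odd' n
  exacts [ramanujanTail_two_mul_eq a b l hq t, ramanujanTail_two_mul_add_one_eq a b l hq hb t]

theorem tendsto_G_shift (hq : ‖q‖ < 1) (hb : ∀ j : ℕ, 1 ≤ j → 1 + b * q ^ j ≠ 0) :
    Tendsto (fun n => G q (a * q ^ ((n + 1) / 2)) (b * q ^ (n / 2)) (l * q ^ n)) atTop (𝓝 1) := by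
  obtain ⟨c₁, hc₁, hq'⟩ := exists_pos_le_prod_norm_one_add_mul_pow (-1) hq fun j hj => by
    simpa [← sub_eq_add_neg, Nat.sub_add_cancel hj] using one_sub_pow_succ_ne_zero hq (j - 1)
  obtain ⟨c₂, hc₂, hb'⟩ := exists_pos_le_prod_norm_one_add_mul_pow b hq hb
  have hden : ∀ t k : ℕ, c₁ * c₂ ≤
      (∏ j ∈ range k, ‖1 - q ^ (j + 1)‖) * ∏ j ∈ range k, ‖1 + b * q ^ t * q ^ (j + 1)‖ := by
    intro t k
    refine mul_le_mul ?_ ?_ hc₂.le (prod_nonneg fun _ _ => norm_nonneg _)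
    · simpa [← sub_eq_add_neg] using hq' 0 k
    · simpa [mul_assoc, ← pow_add, add_assoc] using hb' t k
  set r : ℕ → ℝ := fun n => ‖q‖ * (‖a * q ^ ((n + 1) / 2)‖ + ‖l * q ^ n‖)
  have hpow := tendsto_pow_atTop_nhds_zero_of_norm_lt_one hq
  have hr : Tendsto r atTop (𝓝 0) := by
    have hhalf : Tendsto (fun n : ℕ => (n + 1) / 2) atTop atTop :=
      (Nat.tendsto_div_const_atTop two_ne_zero).comp (tendsto_add_atTop_nat 1)
    simpa [r] using (((hpow.comp hhalf).const_mul a).norm.add (hpow.const_mul l).norm).const_mul ‖q‖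
  have hbound : Tendsto (fun n => r n / (c₁ * c₂) * (1 - r n)⁻¹) atTop (𝓝 0) := by
    simpa using (hr.div_const _).mul ((tendsto_const_nhds.sub hr).inv₀ (by simp))
  refine tendsto_sub_nhds_zero_iff.1 (squeeze_zero_norm' ?_ hbound)
  filter_upwards [hr.eventually (gt_mem_nhds one_pos)] with n hn
  exact norm_G_sub_one_le hq _ _ _ (by positivity) (hden (n / 2)) hn

theorem norm_ramanujanNumer_le (hq : ‖q‖ ≤ 1) (m : ℕ) :
    ‖ramanujanNumer q a b l m‖ ≤ (‖a‖ + ‖b‖ + ‖l‖) * √‖q‖ ^ m := by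
  have hterm : ∀ (x : ℂ) (e : ℕ), m ≤ 2 * e → ‖x * q ^ e‖ ≤ ‖x‖ * √‖q‖ ^ m := fun x e he => by
    rw [norm_mul, norm_pow]
    nth_rw 1 [← Real.sq_sqrt (norm_nonneg q)]
    rw [← pow_mul]
    exact mul_le_mul_of_nonneg_left
      (pow_le_pow_of_le_one (Real.sqrt_nonneg _) (Real.sqrt_le_one.2 hq) he) (norm_nonneg x)
  have hs := pow_nonneg (Real.sqrt_nonneg ‖q‖) m
  unfold ramanujanNumer
  split_ifs
  · calc _ ≤ ‖a * q ^ ((m + 1) / 2)‖ + ‖l * q ^ m‖ := norm_add_le _ _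
      _ ≤ ‖a‖ * √‖q‖ ^ m + ‖l‖ * √‖q‖ ^ m :=
          add_le_add (hterm a _ (by omega)) (hterm l m (by omega))
      _ ≤ _ := by nlinarith [norm_nonneg b]
  · calc _ ≤ ‖b * q ^ (m / 2)‖ + ‖l * q ^ m‖ := norm_add_le _ _
      _ ≤ ‖b‖ * √‖q‖ ^ m + ‖l‖ * √‖q‖ ^ m :=
          add_le_add (hterm b _ (by omega)) (hterm l m (by omega))
      _ ≤ _ := by nlinarith [norm_nonneg a]

theorem summable_norm_ramanujanNumer (hq : ‖q‖ < 1) : Summable (‖ramanujanNumer q a b l ·‖) :=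
  .of_nonneg_of_le (fun _ => norm_nonneg _) (norm_ramanujanNumer_le a b l hq.le)
    ((summable_geometric_of_lt_one (Real.sqrt_nonneg _)
      ((Real.sqrt_lt' one_pos).2 (by simpa using hq))).mul_left _)

theorem tendsto_ramanujanNumer_mul_tail (hq : ‖q‖ < 1) (hb : ∀ j : ℕ, 1 ≤ j → 1 + b * q ^ j ≠ 0) :
    Tendsto (fun n => ramanujanNumer q a b l (n + 1) * ramanujanTail q a b l (n + 2))
      atTop (𝓝 0) := by
  obtain ⟨c, hc, hP⟩ := exists_pos_le_prod_norm_one_add_mul_pow b hq hb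
  have hnumer : Tendsto (fun n => ramanujanNumer q a b l (n + 1)) atTop (𝓝 0) :=
    tendsto_zero_iff_norm_tendsto_zero.2
      ((summable_norm_ramanujanNumer a b l hq).tendsto_atTop_zero.comp (tendsto_add_atTop_nat 1))
  have hbdd : ∀ᶠ n in atTop, ‖ramanujanTail q a b l n‖ ≤ 2 / c := by
    filter_upwards [(tendsto_G_shift a b l hq hb).norm.eventually
      (ge_mem_nhds (by norm_num : ‖(1 : ℂ)‖ < 2))] with n hn
    rw [ramanujanTail, norm_div, norm_prod]
    exact div_le_div₀ zero_le_two hn hc (by simpa using hP 0 (n / 2))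
  exact hnumer.zero_mul_isBoundedUnder_le
    (isBoundedUnder_of_eventually_le ((tendsto_add_atTop_nat 2).eventually hbdd))

theorem eventually_ramanujanTail_ne_zero (hq : ‖q‖ < 1) (hb : ∀ j : ℕ, 1 ≤ j → 1 + b * q ^ j ≠ 0) :
    ∀ᶠ n in atTop, ramanujanTail q a b l n ≠ 0 := by
  filter_upwards [(tendsto_G_shift a b l hq hb).eventually_ne one_ne_zero] with n hn
  exact div_ne_zero hn (prod_ne_zero_iff.2 fun j _ => hb (j + 1) (by omega))

end Ramanujan

theorem stmt0 (a b l q : ℂ) (hq : ‖q‖ < 1)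
    (hb : ∀ j : ℕ, 1 ≤ j → 1 + b * q ^ j ≠ 0)
    (hG : G q (a * q) b (l * q) ≠ 0) :
    CFConvergesTo
      (fun m => if m % 2 = 1 then a * q ^ ((m + 1) / 2) + l * q ^ m
        else b * q ^ (m / 2) + l * q ^ m)
      (fun _ => 1)
      (G q a b l / G q (a * q) b (l * q)) := by
  have h0 : ramanujanTail q a b l 0 = G q a b l := by simp [ramanujanTail]
  have h1 : ramanujanTail q a b l 1 = G q (a * q) b (l * q) := by simp [ramanujanTail]
  have := cfConvergesTo_of_tail (summable_norm_ramanujanNumer a b l hq)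
    (ramanujanTail_eq a b l hq hb) (tendsto_ramanujanNumer_mul_tail a b l hq hb)
    (eventually_ramanujanTail_ne_zero a b l hq hb) (h1 ▸ hG)
  rwa [h0, h1] at this
end

section
/- Let a, b, λ, q be complex numbers with |q| < 1 and 1 + bq^j ≠ 0 for all integers j ≥ 1, and suppose G(aq, b, λq) ≠ 0. Then the continued fraction with b₀ = 1 + aq, partial numerators a_{2n-1} = λq^{2n-1} − abq^{3n-1} and a_{2n} = bqⁿ + λq^{2n} (n ≥ 1), and partial denominators bₙ = 1 + aq^{n+1} (n ≥ 1), converges to G(a, b, λ) / G(aq, b, λq). -/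
open Finset Filter

set_option maxHeartbeats 1000000

-- triangular number step
lemma Tsucc (n : ℕ) : (n+1) * (n+2) / 2 = n * (n+1) / 2 + (n+1) := by
  have h : (n+1) * (n+2) = n * (n+1) + 2 * (n+1) := by ring
  rw [h, Nat.add_mul_div_left _ _ (by norm_num : 0 < 2)]

-- master summability
lemma sumK {r : ℝ} (hr0 : 0 ≤ r) (hr : r < 1) (K : ℝ) (hK : 0 ≤ K) :
    Summable (fun n : ℕ => K ^ n * r ^ (n * (n+1) / 2)) := by
  apply summable_of_ratio_norm_eventually_le (r := 1/2) (by norm_num)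
  have h0 : Tendsto (fun n : ℕ => K * r ^ (n+1)) atTop (nhds 0) := by
    have := (tendsto_pow_atTop_nhds_zero_of_lt_one hr0 hr).const_mul K
    simpa [Function.comp_def] using this.comp (tendsto_add_atTop_nat 1)
  filter_upwards [h0.eventually (eventually_le_nhds (by norm_num : (0:ℝ) < 1/2))] with n hn
  have hfn : (0:ℝ) ≤ K ^ n * r ^ (n * (n+1) / 2) := by positivity
  have hfs : K ^ (n+1) * r ^ ((n+1) * (n+2) / 2)
      = (K * r ^ (n+1)) * (K ^ n * r ^ (n * (n+1) / 2)) := by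
    rw [Tsucc, pow_add, pow_succ]; ring
  rw [Real.norm_eq_abs, Real.norm_eq_abs, abs_of_nonneg (by positivity),
    abs_of_nonneg hfn, hfs]
  have hcoef : (0:ℝ) ≤ K * r ^ (n+1) := by positivity
  exact mul_le_mul_of_nonneg_right hn hfn

-- Weierstrass product inequality
lemma wstrass (t : Finset ℕ) (ε : ℕ → ℝ) (h0 : ∀ i ∈ t, 0 ≤ ε i) (h1 : ∀ i ∈ t, ε i ≤ 1) :
    1 - ∑ i ∈ t, ε i ≤ ∏ i ∈ t, (1 - ε i) := by
  classical
  induction t using Finset.induction with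
  | empty => simp
  | @insert x s hx ih =>
    rw [Finset.sum_insert hx, Finset.prod_insert hx]
    have hs : 1 - ∑ i ∈ s, ε i ≤ ∏ i ∈ s, (1 - ε i) :=
      ih (fun i hi => h0 i (Finset.mem_insert_of_mem hi))
        (fun i hi => h1 i (Finset.mem_insert_of_mem hi))
    have hε0 := h0 x (Finset.mem_insert_self x s)
    have hε1 := h1 x (Finset.mem_insert_self x s)
    have hsum0 : 0 ≤ ∑ i ∈ s, ε i := Finset.sum_nonneg (fun i hi => h0 i (Finset.mem_insert_of_mem hi))
    nlinarith [mul_le_mul_of_nonneg_left hs (by linarith : (0:ℝ) ≤ 1 - ε x)]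

-- product over subset with factors in [0,1] : superset product smaller
lemma prod_subset_ge {s t : Finset ℕ} (h : s ⊆ t) (f : ℕ → ℝ)
    (h0 : ∀ i ∈ t, 0 ≤ f i) (h1 : ∀ i ∈ t, f i ≤ 1) :
    ∏ i ∈ t, f i ≤ ∏ i ∈ s, f i := by
  classical
  rw [← Finset.prod_sdiff h]
  have hle1 : ∏ i ∈ t \ s, f i ≤ 1 :=
    Finset.prod_le_one (fun i hi => h0 i (Finset.mem_sdiff.mp hi).1)
      (fun i hi => h1 i (Finset.mem_sdiff.mp hi).1)
  have hge0 : 0 ≤ ∏ i ∈ s, f i := Finset.prod_nonneg (fun i hi => h0 i (h hi))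
  calc (∏ i ∈ t \ s, f i) * ∏ i ∈ s, f i ≤ 1 * ∏ i ∈ s, f i :=
        mul_le_mul_of_nonneg_right hle1 hge0
    _ = ∏ i ∈ s, f i := one_mul _

lemma prod_lb (q β : ℂ) (hq : ‖q‖ < 1) (hβ : ∀ j : ℕ, 1 ≤ j → 1 + β * q ^ j ≠ 0) :
    ∃ c : ℝ, 0 < c ∧ ∀ m k : ℕ, c ≤ ‖∏ j ∈ Finset.range k, (1 + β * q ^ (m + j + 1))‖ := by
  have hq0 : 0 ≤ ‖q‖ := norm_nonneg q
  -- choose N with tail small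
  obtain ⟨N, hN⟩ : ∃ N : ℕ, ‖β‖ * ‖q‖ ^ (N+1) * (1 - ‖q‖)⁻¹ ≤ 1/2 := by
    have h0 : Tendsto (fun n : ℕ => ‖β‖ * ‖q‖ ^ (n+1) * (1 - ‖q‖)⁻¹) atTop (nhds 0) := by
      have := ((tendsto_pow_atTop_nhds_zero_of_lt_one hq0 hq).const_mul ‖β‖).mul_const (1 - ‖q‖)⁻¹
      simpa [Function.comp_def] using (this.comp (tendsto_add_atTop_nat 1))
    obtain ⟨N, hN⟩ := (h0.eventually (eventually_le_nhds (by norm_num : (0:ℝ) < 1/2))).exists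
    exact ⟨N, hN⟩
  set g : ℕ → ℝ := fun i => min 1 ‖1 + β * q ^ i‖ with hg
  set c1 : ℝ := ∏ i ∈ Finset.Icc 1 N, g i with hc1
  have hgpos : ∀ i, 1 ≤ i → 0 < g i := fun i hi =>
    lt_min one_pos (norm_pos_iff.mpr (hβ i hi))
  have hgle1 : ∀ i, g i ≤ 1 := fun i => min_le_left _ _
  have hg0 : ∀ i, 1 ≤ i → g i ≤ ‖1 + β * q ^ i‖ := fun i _ => min_le_right _ _
  have hc1pos : 0 < c1 := Finset.prod_pos (fun i hi => hgpos i (Finset.mem_Icc.mp hi).1)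
  refine ⟨c1 * (1/2), by positivity, fun m k => ?_⟩
  -- convert to interval product
  have hconv : ∏ j ∈ Finset.range k, (1 + β * q ^ (m + j + 1))
      = ∏ i ∈ Finset.Ico (m+1) (m+1+k), (1 + β * q ^ i) := by
    rw [Finset.prod_Ico_eq_prod_range]
    have : m + 1 + k - (m + 1) = k := by omega
    rw [this]
    exact Finset.prod_congr rfl (fun j _ => by rw [show m + 1 + j = m + j + 1 by omega])
  rw [hconv, norm_prod]
  set S := Finset.Ico (m+1) (m+1+k) with hS
  have hmem : ∀ i ∈ S, 1 ≤ i := fun i hi => by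
    have := (Finset.mem_Ico.mp hi).1; omega
  rw [← Finset.prod_filter_mul_prod_filter_not S (fun i => i ≤ N)]
  have hpart1 : c1 ≤ ∏ i ∈ S.filter (fun i => i ≤ N), ‖1 + β * q ^ i‖ := by
    have hsub : S.filter (fun i => i ≤ N) ⊆ Finset.Icc 1 N := by
      intro i hi
      obtain ⟨hiS, hile⟩ := Finset.mem_filter.mp hi
      exact Finset.mem_Icc.mpr ⟨hmem i hiS, hile⟩
    calc c1 ≤ ∏ i ∈ S.filter (fun i => i ≤ N), g i :=
          prod_subset_ge hsub g (fun i hi => (hgpos i (Finset.mem_Icc.mp hi).1).le)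
            (fun i _ => hgle1 i)
      _ ≤ ∏ i ∈ S.filter (fun i => i ≤ N), ‖1 + β * q ^ i‖ :=
          Finset.prod_le_prod
            (fun i hi => (hgpos i (hmem i (Finset.mem_filter.mp hi).1)).le)
            (fun i hi => hg0 i (hmem i (Finset.mem_filter.mp hi).1))
  have hpart2 : (1:ℝ)/2 ≤ ∏ i ∈ S.filter (fun i => ¬ i ≤ N), ‖1 + β * q ^ i‖ := by
    set t := S.filter (fun i => ¬ i ≤ N) with ht
    have htN : ∀ i ∈ t, N + 1 ≤ i := fun i hi => by
      have := (Finset.mem_filter.mp hi).2; omega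
    set ε : ℕ → ℝ := fun i => ‖β‖ * ‖q‖ ^ i with hε
    have hε0 : ∀ i, 0 ≤ ε i := fun i => by positivity
    have hεsmall : ∀ i ∈ t, ε i ≤ 1/2 * (1 - ‖q‖) := by
      intro i hi
      have h1 : ‖q‖ ^ i ≤ ‖q‖ ^ (N+1) := pow_le_pow_of_le_one hq0 hq.le (htN i hi)
      have h2 : ‖β‖ * ‖q‖ ^ i ≤ ‖β‖ * ‖q‖ ^ (N+1) := by
        exact mul_le_mul_of_nonneg_left h1 (norm_nonneg β)
      have hpos : 0 < 1 - ‖q‖ := by linarith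
      have h3 : ‖β‖ * ‖q‖ ^ (N+1) ≤ 1/2 * (1 - ‖q‖) := by
        have h := mul_le_mul_of_nonneg_right hN hpos.le
        rw [mul_assoc, inv_mul_cancel₀ hpos.ne', mul_one] at h
        linarith
      exact h2.trans h3
    have hε1 : ∀ i ∈ t, ε i ≤ 1 := by
      intro i hi
      have := hεsmall i hi
      have : 1/2 * (1 - ‖q‖) ≤ 1 := by nlinarith
      linarith [hεsmall i hi]
    have hsumε : ∑ i ∈ t, ε i ≤ 1/2 := by
      have hsub : t ⊆ Finset.Ico (N+1) (m+1+k) := by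
        intro i hi
        have h1 := htN i hi
        have h2 := (Finset.mem_Ico.mp (Finset.mem_filter.mp hi).1).2
        exact Finset.mem_Ico.mpr ⟨h1, h2⟩
      have h1 : ∑ i ∈ t, ε i ≤ ∑ i ∈ Finset.Ico (N+1) (m+1+k), ε i :=
        Finset.sum_le_sum_of_subset_of_nonneg hsub (fun i _ _ => hε0 i)
      have h2 : ∑ i ∈ Finset.Ico (N+1) (m+1+k), ε i
          = ‖β‖ * ‖q‖^(N+1) * ∑ j ∈ Finset.range (m+1+k-(N+1)), ‖q‖ ^ j := by
        rw [Finset.sum_Ico_eq_sum_range, Finset.mul_sum]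
        exact Finset.sum_congr rfl (fun j _ => by rw [hε, pow_add]; ring
          )
      have h3 : ∑ j ∈ Finset.range (m+1+k-(N+1)), ‖q‖ ^ j ≤ (1 - ‖q‖)⁻¹ := by
        rw [← tsum_geometric_of_lt_one hq0 hq]
        exact Summable.sum_le_tsum _ (fun j _ => by positivity) (summable_geometric_of_lt_one hq0 hq)
      calc ∑ i ∈ t, ε i ≤ ‖β‖ * ‖q‖^(N+1) * ∑ j ∈ Finset.range (m+1+k-(N+1)), ‖q‖ ^ j := by
            rw [← h2]; exact h1
        _ ≤ ‖β‖ * ‖q‖^(N+1) * (1 - ‖q‖)⁻¹ := by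
            exact mul_le_mul_of_nonneg_left h3 (by positivity)
        _ ≤ 1/2 := hN
    calc (1:ℝ)/2 ≤ 1 - ∑ i ∈ t, ε i := by linarith
      _ ≤ ∏ i ∈ t, (1 - ε i) := wstrass t ε (fun i _ => hε0 i) (fun i hi => hε1 i hi)
      _ ≤ ∏ i ∈ t, ‖1 + β * q ^ i‖ := by
          apply Finset.prod_le_prod
          · intro i hi; linarith [hεsmall i hi, hq0, pow_nonneg hq0 i]
          · intro i hi
            have h5 := norm_sub_norm_le (1:ℂ) (-(β * q ^ i))
            rw [sub_neg_eq_add, norm_neg, norm_one, norm_mul, norm_pow] at h5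
            show 1 - ‖β‖ * ‖q‖ ^ i ≤ _
            linarith
  calc c1 * (1/2) ≤ (∏ i ∈ S.filter (fun i => i ≤ N), ‖1 + β * q ^ i‖)
        * ∏ i ∈ S.filter (fun i => ¬ i ≤ N), ‖1 + β * q ^ i‖ := by
        apply mul_le_mul hpart1 hpart2 (by norm_num) (le_trans hc1pos.le hpart1)
    _ = _ := rfl

noncomputable def gt (q x β y : ℂ) (n : ℕ) : ℂ :=
  q ^ (n * (n + 1) / 2) * (∏ k ∈ Finset.range n, (x + y * q ^ k)) /
    ((∏ j ∈ Finset.range n, (1 - q ^ (j + 1))) * ∏ j ∈ Finset.range n, (1 + β * q ^ (j + 1)))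

lemma G_eq_tsum_gt (q x β y : ℂ) : G q x β y = ∑' n, gt q x β y n := rfl

lemma one_sub_qpow_ne (q : ℂ) (hq : ‖q‖ < 1) (j : ℕ) : (1 : ℂ) - q ^ (j+1) ≠ 0 := by
  intro h
  have h2 : ‖q ^ (j+1)‖ < 1 := by
    rw [norm_pow]
    calc ‖q‖ ^ (j+1) ≤ ‖q‖ ^ 1 := pow_le_pow_of_le_one (norm_nonneg q) hq.le (by omega)
      _ < 1 := by simpa using hq
  have h3 : (1:ℂ) = q ^ (j+1) := sub_eq_zero.mp h
  rw [← h3] at h2; simp at h2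

lemma norm_one_sub_qpow_ge (q : ℂ) (hq : ‖q‖ < 1) (j : ℕ) :
    1 - ‖q‖ ≤ ‖(1 : ℂ) - q ^ (j+1)‖ := by
  have h5 := norm_sub_norm_le (1:ℂ) (q ^ (j+1))
  rw [norm_one, norm_pow] at h5
  have : ‖q‖ ^ (j+1) ≤ ‖q‖ ^ 1 := pow_le_pow_of_le_one (norm_nonneg q) hq.le (by omega)
  simp only [pow_one] at this
  linarith

lemma norm_gt_le (q x β y : ℂ) (hq : ‖q‖ < 1) {c : ℝ} (hc0 : 0 < c)
    (hc : ∀ k : ℕ, c ≤ ‖∏ j ∈ Finset.range k, (1 + β * q ^ (j + 1))‖) (n : ℕ) :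
    ‖gt q x β y n‖ ≤ c⁻¹ * ((‖x‖ + ‖y‖) / (1 - ‖q‖)) ^ n * ‖q‖ ^ (n * (n+1) / 2) := by
  have hq1 : 0 < 1 - ‖q‖ := by linarith
  rw [gt, norm_div, norm_mul, norm_mul, norm_pow]
  have hnum : ‖∏ k ∈ Finset.range n, (x + y * q ^ k)‖ ≤ (‖x‖ + ‖y‖) ^ n := by
    rw [norm_prod]
    calc ∏ k ∈ Finset.range n, ‖x + y * q ^ k‖ ≤ ∏ k ∈ Finset.range n, (‖x‖ + ‖y‖) := by
          apply Finset.prod_le_prod (fun k _ => norm_nonneg _)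
          intro k _
          calc ‖x + y * q ^ k‖ ≤ ‖x‖ + ‖y * q ^ k‖ := norm_add_le _ _
            _ = ‖x‖ + ‖y‖ * ‖q‖ ^ k := by rw [norm_mul, norm_pow]
            _ ≤ ‖x‖ + ‖y‖ * 1 := by
                have : ‖q‖ ^ k ≤ 1 := pow_le_one₀ (norm_nonneg q) hq.le
                nlinarith [norm_nonneg y]
            _ = ‖x‖ + ‖y‖ := by ring
      _ = (‖x‖ + ‖y‖) ^ n := by rw [Finset.prod_const, Finset.card_range]
  have hden1 : (1 - ‖q‖) ^ n ≤ ‖∏ j ∈ Finset.range n, ((1:ℂ) - q ^ (j + 1))‖ := by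
    rw [norm_prod]
    calc (1 - ‖q‖) ^ n = ∏ j ∈ Finset.range n, (1 - ‖q‖) := by
          rw [Finset.prod_const, Finset.card_range]
      _ ≤ ∏ j ∈ Finset.range n, ‖(1:ℂ) - q ^ (j + 1)‖ :=
          Finset.prod_le_prod (fun j _ => hq1.le) (fun j _ => norm_one_sub_qpow_ge q hq j)
  have hden2 := hc n
  have hden : (1 - ‖q‖)^n * c ≤ ‖∏ j ∈ Finset.range n, ((1:ℂ) - q ^ (j + 1))‖
      * ‖∏ j ∈ Finset.range n, (1 + β * q ^ (j + 1))‖ := by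
    apply mul_le_mul hden1 hden2 hc0.le (le_trans (by positivity) hden1)
  have hdpos : (0:ℝ) < (1 - ‖q‖)^n * c := by positivity
  calc ‖q‖ ^ (n * (n+1)/2) * ‖∏ k ∈ Finset.range n, (x + y * q ^ k)‖ /
        (‖∏ j ∈ Finset.range n, ((1:ℂ) - q ^ (j + 1))‖ * ‖∏ j ∈ Finset.range n, (1 + β * q ^ (j + 1))‖)
      ≤ ‖q‖ ^ (n * (n+1)/2) * (‖x‖ + ‖y‖) ^ n / ((1 - ‖q‖)^n * c) := by
        apply div_le_div₀ (by positivity) _ hdpos hden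
        exact mul_le_mul_of_nonneg_left hnum (by positivity)
    _ = c⁻¹ * ((‖x‖ + ‖y‖) / (1 - ‖q‖)) ^ n * ‖q‖ ^ (n * (n+1) / 2) := by
        rw [div_pow]; field_simp

lemma summable_gt_mul (q x β y : ℂ) (hq : ‖q‖ < 1) {c : ℝ} (hc0 : 0 < c)
    (hc : ∀ k : ℕ, c ≤ ‖∏ j ∈ Finset.range k, (1 + β * q ^ (j + 1))‖)
    (coef : ℕ → ℂ) {M : ℝ} (hM : ∀ n, ‖coef n‖ ≤ M) :
    Summable (fun n => gt q x β y n * coef n) := by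
  have hM0 : 0 ≤ M := le_trans (norm_nonneg _) (hM 0)
  have hK : 0 ≤ (‖x‖ + ‖y‖) / (1 - ‖q‖) := by
    have : 0 < 1 - ‖q‖ := by linarith
    positivity
  apply Summable.of_norm_bounded
    (g := fun n => (M * c⁻¹) * (((‖x‖ + ‖y‖) / (1 - ‖q‖)) ^ n * ‖q‖ ^ (n * (n+1) / 2)))
  · apply Summable.mul_left
    exact sumK (norm_nonneg q) hq _ hK
  · intro n
    rw [norm_mul]
    calc ‖gt q x β y n‖ * ‖coef n‖
        ≤ (c⁻¹ * ((‖x‖ + ‖y‖) / (1 - ‖q‖)) ^ n * ‖q‖ ^ (n * (n+1) / 2)) * M := by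
          apply mul_le_mul (norm_gt_le q x β y hq hc0 hc n) (hM n) (norm_nonneg _)
          positivity
      _ = (M * c⁻¹) * (((‖x‖ + ‖y‖) / (1 - ‖q‖)) ^ n * ‖q‖ ^ (n * (n+1) / 2)) := by ring

lemma norm_G_le (q x β y : ℂ) (hq : ‖q‖ < 1) {c : ℝ} (hc0 : 0 < c)
    (hc : ∀ k : ℕ, c ≤ ‖∏ j ∈ Finset.range k, (1 + β * q ^ (j + 1))‖)
    {X Y : ℝ} (hX : ‖x‖ ≤ X) (hY : ‖y‖ ≤ Y) :
    ‖G q x β y‖ ≤ c⁻¹ * ∑' n : ℕ, ((X + Y) / (1 - ‖q‖)) ^ n * ‖q‖ ^ (n * (n+1) / 2) := by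
  have hq1 : 0 < 1 - ‖q‖ := by linarith
  have hX0 : 0 ≤ X := le_trans (norm_nonneg _) hX
  have hY0 : 0 ≤ Y := le_trans (norm_nonneg _) hY
  have hbound : ∀ n, ‖gt q x β y n‖ ≤ c⁻¹ * (((X + Y) / (1 - ‖q‖)) ^ n * ‖q‖ ^ (n * (n+1) / 2)) := by
    intro n
    calc ‖gt q x β y n‖ ≤ c⁻¹ * ((‖x‖ + ‖y‖) / (1 - ‖q‖)) ^ n * ‖q‖ ^ (n * (n+1) / 2) :=
          norm_gt_le q x β y hq hc0 hc n
      _ ≤ c⁻¹ * (((X + Y) / (1 - ‖q‖)) ^ n * ‖q‖ ^ (n * (n+1) / 2)) := by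
          rw [← mul_assoc]
          have hd : ((‖x‖ + ‖y‖) / (1 - ‖q‖)) ^ n ≤ ((X + Y) / (1 - ‖q‖)) ^ n := by
            apply pow_le_pow_left₀ (by positivity)
            gcongr
          apply mul_le_mul_of_nonneg_right _ (by positivity)
          exact mul_le_mul_of_nonneg_left hd (by positivity)
  have hsummaj : Summable (fun n : ℕ => c⁻¹ * (((X + Y) / (1 - ‖q‖)) ^ n * ‖q‖ ^ (n * (n+1) / 2))) :=
    (sumK (norm_nonneg q) hq _ (by positivity)).mul_left _
  have hsumgt : Summable (fun n => ‖gt q x β y n‖) := by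
    apply Summable.of_nonneg_of_le (fun n => norm_nonneg _) hbound hsummaj
  calc ‖G q x β y‖ ≤ ∑' n, ‖gt q x β y n‖ := by
        rw [G_eq_tsum_gt]; exact norm_tsum_le_tsum_norm hsumgt
    _ ≤ ∑' n : ℕ, c⁻¹ * (((X + Y) / (1 - ‖q‖)) ^ n * ‖q‖ ^ (n * (n+1) / 2)) :=
        Summable.tsum_le_tsum hbound hsumgt hsummaj
    _ = c⁻¹ * ∑' n : ℕ, ((X + Y) / (1 - ‖q‖)) ^ n * ‖q‖ ^ (n * (n+1) / 2) := tsum_mul_left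

lemma summable_gt (q x β y : ℂ) (hq : ‖q‖ < 1) {c : ℝ} (hc0 : 0 < c)
    (hc : ∀ k : ℕ, c ≤ ‖∏ j ∈ Finset.range k, (1 + β * q ^ (j + 1))‖) :
    Summable (gt q x β y) := by
  have := summable_gt_mul q x β y hq hc0 hc (fun _ => 1) (M := 1) (fun n => by norm_num)
  simpa using this

section star
variable (q x β y : ℂ) (hq : ‖q‖ < 1) (hβ : ∀ j : ℕ, 1 ≤ j → 1 + β * q ^ j ≠ 0)

-- non-vanishing of partial products
lemma Qp_ne (hq : ‖q‖ < 1) (n : ℕ) : (∏ j ∈ Finset.range n, ((1:ℂ) - q ^ (j + 1))) ≠ 0 :=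
  Finset.prod_ne_zero_iff.mpr (fun j _ => one_sub_qpow_ne q hq j)

lemma Cb_ne (hβ : ∀ j : ℕ, 1 ≤ j → 1 + β * q ^ j ≠ 0) (n : ℕ) :
    (∏ j ∈ Finset.range n, (1 + β * q ^ (j + 1))) ≠ 0 :=
  Finset.prod_ne_zero_iff.mpr (fun j _ => hβ (j+1) (by omega))

lemma Cbq_factor (n : ℕ) : (1 + (β * q) * q ^ (n + 1)) = 1 + β * q ^ (n + 2) := by ring

lemma Cbq_ne (hβ : ∀ j : ℕ, 1 ≤ j → 1 + β * q ^ j ≠ 0) (n : ℕ) :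
    (∏ j ∈ Finset.range n, (1 + (β * q) * q ^ (j + 1))) ≠ 0 :=
  Finset.prod_ne_zero_iff.mpr (fun j _ => by rw [Cbq_factor]; exact hβ (j+2) (by omega))

-- P1 : C_n(β) * (1+βq^{n+1}) = (1+βq) * C_n(βq)
lemma P1 (n : ℕ) : (∏ j ∈ Finset.range n, (1 + β * q ^ (j + 1))) * (1 + β * q ^ (n + 1))
    = (1 + β * q) * ∏ j ∈ Finset.range n, (1 + (β * q) * q ^ (j + 1)) := by
  have h1 : (∏ j ∈ Finset.range n, (1 + β * q ^ (j + 1))) * (1 + β * q ^ (n + 1))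
      = ∏ j ∈ Finset.range (n+1), (1 + β * q ^ (j + 1)) := (Finset.prod_range_succ _ n).symm
  have h2 : ∏ j ∈ Finset.range (n+1), (1 + β * q ^ (j + 1))
      = (∏ j ∈ Finset.range n, (1 + β * q ^ (j + 1 + 1))) * (1 + β * q ^ (0 + 1)) :=
    Finset.prod_range_succ' _ n
  rw [h1, h2]
  have h3 : ∏ j ∈ Finset.range n, (1 + β * q ^ (j + 1 + 1))
      = ∏ j ∈ Finset.range n, (1 + (β * q) * q ^ (j + 1)) :=
    Finset.prod_congr rfl (fun j _ => by ring)
  rw [h3]; ring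

-- e2-type numerators: ∏ (x*q^s + (y*q^s)*q^k) = (q^s)^n * ∏ (x + y q^k)
lemma num_scale (s : ℕ) (n : ℕ) :
    ∏ k ∈ Finset.range n, (x * q ^ s + (y * q ^ s) * q ^ k)
      = (q ^ s) ^ n * ∏ k ∈ Finset.range n, (x + y * q ^ k) := by
  have h1 : ∏ k ∈ Finset.range n, (x * q ^ s + (y * q ^ s) * q ^ k)
      = ∏ k ∈ Finset.range n, (q ^ s * (x + y * q ^ k)) :=
    Finset.prod_congr rfl (fun k _ => by ring)
  rw [h1, Finset.prod_mul_distrib, Finset.prod_const, Finset.card_range]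


-- e1 : gt_β n * (1+βq) = gt_{βq} n * (1+βq^{n+1})
lemma e1 (hq : ‖q‖ < 1) (hβ : ∀ j : ℕ, 1 ≤ j → 1 + β * q ^ j ≠ 0) (n : ℕ) :
    gt q x β y n * (1 + β * q) = gt q x (β * q) y n * (1 + β * q ^ (n + 1)) := by
  have hQ := Qp_ne q hq n
  have hC := Cb_ne q β hβ n
  have hCq := Cbq_ne q β hβ n
  rw [gt, gt, div_mul_eq_mul_div, div_mul_eq_mul_div, div_eq_div_iff (by exact mul_ne_zero hQ hC) (mul_ne_zero hQ hCq)]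
  linear_combination -(q ^ (n * (n + 1) / 2) * (∏ k ∈ Finset.range n, (x + y * q ^ k))
    * (∏ j ∈ Finset.range n, ((1:ℂ) - q ^ (j + 1)))) * (P1 q β n)

-- e2 : gt q (x q^s) (βq) (y q^s) n = gt q x (βq) y n * (q^s)^n
lemma e2 (s : ℕ) (n : ℕ) :
    gt q (x * q ^ s) (β * q) (y * q ^ s) n = gt q x (β * q) y n * (q ^ s) ^ n := by
  rw [gt, gt, num_scale]
  ring

-- e4 : recurrence for gt q x (βq) y
lemma e4 (hq : ‖q‖ < 1) (hβ : ∀ j : ℕ, 1 ≤ j → 1 + β * q ^ j ≠ 0) (n : ℕ) :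
    gt q x (β * q) y (n+1) * ((1 - q ^ (n+1)) * (1 + β * q ^ (n+2)))
      = gt q x (β * q) y n * (q ^ (n+1) * (x + y * q ^ n)) := by
  have hQ := Qp_ne q hq n
  have hCq := Cbq_ne q β hβ n
  have h1 : (1:ℂ) - q ^ (n+1) ≠ 0 := one_sub_qpow_ne q hq n
  have h2 : (1:ℂ) + β * q ^ (n+2) ≠ 0 := hβ (n+2) (by omega)
  rw [gt, gt, Finset.prod_range_succ, Finset.prod_range_succ, Finset.prod_range_succ,
    Tsucc n, pow_add, Cbq_factor]
  field_simp

-- e4' : recurrence for gt q x β y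
lemma e4' (hq : ‖q‖ < 1) (hβ : ∀ j : ℕ, 1 ≤ j → 1 + β * q ^ j ≠ 0) (n : ℕ) :
    gt q x β y (n+1) * ((1 - q ^ (n+1)) * (1 + β * q ^ (n+1)))
      = gt q x β y n * (q ^ (n+1) * (x + y * q ^ n)) := by
  have hQ := Qp_ne q hq n
  have hC := Cb_ne q β hβ n
  have h1 : (1:ℂ) - q ^ (n+1) ≠ 0 := one_sub_qpow_ne q hq n
  have h2 : (1:ℂ) + β * q ^ (n+1) ≠ 0 := hβ (n+1) (by omega)
  have h2' : (1:ℂ) + q ^ (n+1) * β ≠ 0 := by rw [mul_comm]; exact h2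
  rw [gt, gt, Finset.prod_range_succ, Finset.prod_range_succ, Finset.prod_range_succ,
    Tsucc n, pow_add]
  field_simp

lemma coef_bound_gen (hq : ‖q‖ < 1) : ∀ k : ℕ, ‖q‖ ^ k ≤ 1 :=
  fun k => pow_le_one₀ (norm_nonneg q) hq.le

lemma star2 (hq : ‖q‖ < 1) (hβ : ∀ j : ℕ, 1 ≤ j → 1 + β * q ^ j ≠ 0) :
    (1 + β * q) * G q x β y
      = (1 + x * q) * G q (x * q) (β * q) (y * q)
        + (q * (β + y)) * G q (x * q ^ 2) (β * q) (y * q ^ 2) := by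
  obtain ⟨c, hc0, hc⟩ := prod_lb q β hq hβ
  have hq1 := coef_bound_gen q hq
  have hcq : ∀ k, c ≤ ‖∏ j ∈ Finset.range k, (1 + (β * q) * q ^ (j+1))‖ := by
    intro k
    calc c ≤ ‖∏ j ∈ Finset.range k, (1 + β * q ^ (1 + j + 1))‖ := hc 1 k
      _ = _ := by
          congr 1
          exact Finset.prod_congr rfl (fun j _ => by ring)
  set u : ℕ → ℂ := gt q x (β * q) y with hu
  -- coefficient bounds
  have hb1 : ∀ n : ℕ, ‖(1:ℂ) + β * q ^ (n+1)‖ ≤ 1 + ‖β‖ := by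
    intro n
    calc ‖(1:ℂ) + β * q ^ (n+1)‖ ≤ ‖(1:ℂ)‖ + ‖β * q ^ (n+1)‖ := norm_add_le _ _
      _ = 1 + ‖β‖ * ‖q‖ ^ (n+1) := by rw [norm_one, norm_mul, norm_pow]
      _ ≤ 1 + ‖β‖ := by nlinarith [hq1 (n+1), norm_nonneg β, pow_nonneg (norm_nonneg q) (n+1)]
  have hb2 : ∀ n : ℕ, ‖((1:ℂ) + x * q) * q ^ n‖ ≤ 1 + ‖x‖ := by
    intro n
    rw [norm_mul, norm_pow]
    calc ‖(1:ℂ) + x * q‖ * ‖q‖ ^ n ≤ ‖(1:ℂ) + x * q‖ * 1 :=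
          mul_le_mul_of_nonneg_left (hq1 n) (norm_nonneg _)
      _ = ‖(1:ℂ) + x * q‖ := mul_one _
      _ ≤ ‖(1:ℂ)‖ + ‖x * q‖ := norm_add_le _ _
      _ = 1 + ‖x‖ * ‖q‖ := by rw [norm_one, norm_mul]
      _ ≤ 1 + ‖x‖ := by nlinarith [hq1 1, norm_nonneg x, norm_nonneg q, pow_one ‖q‖ ▸ hq1 1]
  have hb3 : ∀ n : ℕ, ‖(β + y) * q ^ (2*n+1)‖ ≤ ‖β‖ + ‖y‖ := by
    intro n
    rw [norm_mul, norm_pow]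
    calc ‖β + y‖ * ‖q‖ ^ (2*n+1) ≤ ‖β + y‖ * 1 :=
          mul_le_mul_of_nonneg_left (hq1 _) (norm_nonneg _)
      _ = ‖β + y‖ := mul_one _
      _ ≤ ‖β‖ + ‖y‖ := norm_add_le _ _
  have hbφ : ∀ n : ℕ, ‖((1:ℂ) - q ^ n) * (1 + β * q ^ (n+1))‖ ≤ 2 * (1 + ‖β‖) := by
    intro n
    rw [norm_mul]
    have h1 : ‖(1:ℂ) - q ^ n‖ ≤ 2 := by
      calc ‖(1:ℂ) - q ^ n‖ ≤ ‖(1:ℂ)‖ + ‖q ^ n‖ := norm_sub_le _ _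
        _ = 1 + ‖q‖ ^ n := by rw [norm_one, norm_pow]
        _ ≤ 2 := by linarith [hq1 n]
    have h2 := hb1 n
    have h3 : (0:ℝ) ≤ 1 + ‖β‖ := by positivity
    nlinarith [norm_nonneg ((1:ℂ) - q ^ n), norm_nonneg ((1:ℂ) + β * q ^ (n+1))]
  have hbψ : ∀ n : ℕ, ‖q ^ (n+1) * (x + y * q ^ n)‖ ≤ ‖x‖ + ‖y‖ := by
    intro n
    rw [norm_mul, norm_pow]
    have h1 : ‖x + y * q ^ n‖ ≤ ‖x‖ + ‖y‖ := by
      calc ‖x + y * q ^ n‖ ≤ ‖x‖ + ‖y * q ^ n‖ := norm_add_le _ _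
        _ = ‖x‖ + ‖y‖ * ‖q‖ ^ n := by rw [norm_mul, norm_pow]
        _ ≤ ‖x‖ + ‖y‖ := by nlinarith [hq1 n, norm_nonneg y, pow_nonneg (norm_nonneg q) n]
    calc ‖q‖ ^ (n+1) * ‖x + y * q ^ n‖ ≤ 1 * (‖x‖ + ‖y‖) := by
          apply mul_le_mul (hq1 _) h1 (norm_nonneg _) (by norm_num)
      _ = ‖x‖ + ‖y‖ := one_mul _
  -- summabilities
  have hS1 : Summable (fun n => u n * (1 + β * q ^ (n+1))) :=
    summable_gt_mul q x (β*q) y hq hc0 hcq _ hb1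
  have hS2 : Summable (fun n => u n * ((1 + x * q) * q ^ n)) :=
    summable_gt_mul q x (β*q) y hq hc0 hcq _ hb2
  have hS3 : Summable (fun n => u n * ((β + y) * q ^ (2*n+1))) :=
    summable_gt_mul q x (β*q) y hq hc0 hcq _ hb3
  have hSφ : Summable (fun n => u n * ((1 - q ^ n) * (1 + β * q ^ (n+1)))) :=
    summable_gt_mul q x (β*q) y hq hc0 hcq _ hbφ
  have hSψ : Summable (fun n => u n * (q ^ (n+1) * (x + y * q ^ n))) :=
    summable_gt_mul q x (β*q) y hq hc0 hcq _ hbψ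
  have hφψ : ∑' n, u n * ((1 - q ^ n) * (1 + β * q ^ (n+1)))
      = ∑' n, u n * (q ^ (n+1) * (x + y * q ^ n)) := by
    rw [Summable.tsum_eq_zero_add hSφ]
    have h0 : u 0 * ((1 - q ^ 0) * (1 + β * q ^ (0+1))) = 0 := by simp
    rw [h0, zero_add]
    exact tsum_congr (fun n => by
      have h := e4 q x β y hq hβ n
      calc u (n+1) * ((1 - q ^ (n+1)) * (1 + β * q ^ (n+1+1))) 
          = gt q x (β*q) y (n+1) * ((1 - q ^ (n+1)) * (1 + β * q ^ (n+2))) := rfl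
        _ = _ := h)
  calc (1 + β * q) * G q x β y = ∑' n, gt q x β y n * (1 + β * q) := by
        rw [G_eq_tsum_gt, ← tsum_mul_left]
        exact tsum_congr (fun n => mul_comm _ _)
    _ = ∑' n, u n * (1 + β * q ^ (n+1)) := tsum_congr (fun n => e1 q x β y hq hβ n)
    _ = ∑' n, ((u n * ((1 - q ^ n) * (1 + β * q ^ (n+1))) - u n * (q ^ (n+1) * (x + y * q ^ n)))
          + (u n * ((1 + x * q) * q ^ n) + u n * ((β + y) * q ^ (2*n+1)))) :=
        tsum_congr (fun n => by ring)
    _ = ((∑' n, u n * ((1 - q ^ n) * (1 + β * q ^ (n+1)))) - ∑' n, u n * (q ^ (n+1) * (x + y * q ^ n)))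
          + ((∑' n, u n * ((1 + x * q) * q ^ n)) + ∑' n, u n * ((β + y) * q ^ (2*n+1))) := by
        rw [Summable.tsum_add (hSφ.sub hSψ) (hS2.add hS3), Summable.tsum_sub hSφ hSψ, Summable.tsum_add hS2 hS3]
    _ = (∑' n, u n * ((1 + x * q) * q ^ n)) + ∑' n, u n * ((β + y) * q ^ (2*n+1)) := by
        rw [hφψ]; ring
    _ = (1 + x * q) * G q (x * q) (β * q) (y * q)
        + (q * (β + y)) * G q (x * q ^ 2) (β * q) (y * q ^ 2) := by
        congr 1
        · rw [G_eq_tsum_gt, ← tsum_mul_left]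
          refine tsum_congr (fun n => ?_)
          have h := e2 q x β y 1 n
          rw [pow_one] at h
          rw [h]; ring
        · rw [G_eq_tsum_gt, ← tsum_mul_left]
          refine tsum_congr (fun n => ?_)
          rw [e2 q x β y 2 n]; ring

-- e2 with denominator parameter unchanged
lemma e2b (s : ℕ) (n : ℕ) :
    gt q (x * q ^ s) β (y * q ^ s) n = gt q x β y n * (q ^ s) ^ n := by
  rw [gt, gt, num_scale]
  ring

lemma star1 (hq : ‖q‖ < 1) (hβ : ∀ j : ℕ, 1 ≤ j → 1 + β * q ^ j ≠ 0) :
    G q x β y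
      = (1 + x * q) * G q (x * q) β (y * q)
        + (q * (y - x * (β * q)) / (1 + β * q)) * G q (x * q ^ 2) (β * q) (y * q ^ 2) := by
  obtain ⟨c, hc0, hc⟩ := prod_lb q β hq hβ
  have hq1 := coef_bound_gen q hq
  have hβq : (1 : ℂ) + β * q ≠ 0 := by
    have := hβ 1 (by omega); rwa [pow_one] at this
  have hβn : ∀ n : ℕ, (1 : ℂ) + β * q ^ (n+1) ≠ 0 := fun n => hβ (n+1) (by omega)
  have hc2 : ∀ n : ℕ, c ≤ ‖(1:ℂ) + β * q ^ (n+1)‖ := by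
    intro n
    have h := hc n 1
    rwa [Finset.prod_range_one, show n + 0 + 1 = n + 1 by omega] at h
  have hc0k : ∀ k, c ≤ ‖∏ j ∈ Finset.range k, (1 + β * q ^ (j+1))‖ := by
    intro k
    have h := hc 0 k
    have he : ∀ j : ℕ, (0:ℕ) + j + 1 = j + 1 := fun j => by omega
    calc c ≤ ‖∏ j ∈ Finset.range k, (1 + β * q ^ (0 + j + 1))‖ := h
      _ = _ := by
          congr 1
          exact Finset.prod_congr rfl (fun j _ => by rw [he j])
  set v : ℕ → ℂ := gt q x β y with hv
  -- bounds
  have hbψ : ∀ n : ℕ, ‖q ^ (n+1) * (x + y * q ^ n)‖ ≤ ‖x‖ + ‖y‖ := by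
    intro n
    rw [norm_mul, norm_pow]
    have h1 : ‖x + y * q ^ n‖ ≤ ‖x‖ + ‖y‖ := by
      calc ‖x + y * q ^ n‖ ≤ ‖x‖ + ‖y * q ^ n‖ := norm_add_le _ _
        _ = ‖x‖ + ‖y‖ * ‖q‖ ^ n := by rw [norm_mul, norm_pow]
        _ ≤ ‖x‖ + ‖y‖ := by nlinarith [hq1 n, norm_nonneg y, pow_nonneg (norm_nonneg q) n]
    calc ‖q‖ ^ (n+1) * ‖x + y * q ^ n‖ ≤ 1 * (‖x‖ + ‖y‖) :=
          mul_le_mul (hq1 _) h1 (norm_nonneg _) (by norm_num)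
      _ = ‖x‖ + ‖y‖ := one_mul _
  have hbψ' : ∀ n : ℕ, ‖q ^ (n+1) * (x + y * q ^ n) / (1 + β * q ^ (n+1))‖ ≤ (‖x‖ + ‖y‖) / c := by
    intro n
    rw [norm_div]
    exact div_le_div₀ (by positivity) (hbψ n) hc0 (hc2 n)
  have hb1' : ∀ n : ℕ, ‖(1:ℂ) - q ^ n‖ ≤ 2 := by
    intro n
    calc ‖(1:ℂ) - q ^ n‖ ≤ ‖(1:ℂ)‖ + ‖q ^ n‖ := norm_sub_le _ _
      _ = 1 + ‖q‖ ^ n := by rw [norm_one, norm_pow]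
      _ ≤ 2 := by linarith [hq1 n]
  have hb2 : ∀ n : ℕ, ‖((1:ℂ) + x * q) * q ^ n‖ ≤ 1 + ‖x‖ := by
    intro n
    rw [norm_mul, norm_pow]
    calc ‖(1:ℂ) + x * q‖ * ‖q‖ ^ n ≤ ‖(1:ℂ) + x * q‖ * 1 :=
          mul_le_mul_of_nonneg_left (hq1 n) (norm_nonneg _)
      _ = ‖(1:ℂ) + x * q‖ := mul_one _
      _ ≤ ‖(1:ℂ)‖ + ‖x * q‖ := norm_add_le _ _
      _ = 1 + ‖x‖ * ‖q‖ := by rw [norm_one, norm_mul]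
      _ ≤ 1 + ‖x‖ := by nlinarith [pow_one ‖q‖ ▸ hq1 1, norm_nonneg x, norm_nonneg q]
  have hb3' : ∀ n : ℕ, ‖q ^ (2*n+1) * (y - x * (β * q)) / (1 + β * q ^ (n+1))‖
      ≤ ‖y - x * (β * q)‖ / c := by
    intro n
    rw [norm_div, norm_mul, norm_pow]
    apply div_le_div₀ (norm_nonneg _) _ hc0 (hc2 n)
    calc ‖q‖ ^ (2*n+1) * ‖y - x * (β * q)‖ ≤ 1 * ‖y - x * (β * q)‖ :=
          mul_le_mul_of_nonneg_right (hq1 _) (norm_nonneg _)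
      _ = ‖y - x * (β * q)‖ := one_mul _
  -- summabilities
  have hSv : Summable (fun n => v n * (1:ℂ)) :=
    summable_gt_mul q x β y hq hc0 hc0k _ (M := 1) (fun n => by norm_num)
  have hS2 : Summable (fun n => v n * ((1 + x * q) * q ^ n)) :=
    summable_gt_mul q x β y hq hc0 hc0k _ hb2
  have hS3 : Summable (fun n => v n * (q ^ (2*n+1) * (y - x * (β * q)) / (1 + β * q ^ (n+1)))) := by
    have := summable_gt_mul q x β y hq hc0 hc0k
      (fun n => q ^ (2*n+1) * (y - x * (β * q)) / (1 + β * q ^ (n+1))) hb3'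
    simpa [mul_div_assoc] using this
  have hSφ : Summable (fun n => v n * (1 - q ^ n)) :=
    summable_gt_mul q x β y hq hc0 hc0k _ hb1'
  have hSψ : Summable (fun n => v n * (q ^ (n+1) * (x + y * q ^ n) / (1 + β * q ^ (n+1)))) := by
    have := summable_gt_mul q x β y hq hc0 hc0k
      (fun n => q ^ (n+1) * (x + y * q ^ n) / (1 + β * q ^ (n+1))) hbψ'
    simpa [mul_div_assoc] using this
  have hφψ : ∑' n, v n * (1 - q ^ n)
      = ∑' n, v n * (q ^ (n+1) * (x + y * q ^ n) / (1 + β * q ^ (n+1))) := by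
    rw [Summable.tsum_eq_zero_add hSφ]
    have h0 : v 0 * (1 - q ^ 0) = 0 := by simp
    rw [h0, zero_add]
    refine tsum_congr (fun n => ?_)
    have h := e4' q x β y hq hβ n
    have h2 := hβn n
    have h1 := one_sub_qpow_ne q hq n
    have h2' : (1:ℂ) + q ^ (n+1) * β ≠ 0 := by rw [mul_comm]; exact h2
    field_simp
    linear_combination h
  calc G q x β y = ∑' n, v n * (1:ℂ) := by
        rw [G_eq_tsum_gt]; exact tsum_congr (fun n => (mul_one _).symm)
    _ = ∑' n, ((v n * (1 - q ^ n) - v n * (q ^ (n+1) * (x + y * q ^ n) / (1 + β * q ^ (n+1))))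
          + (v n * ((1 + x * q) * q ^ n)
            + v n * (q ^ (2*n+1) * (y - x * (β * q)) / (1 + β * q ^ (n+1))))) := by
        refine tsum_congr (fun n => ?_)
        have h2 := hβn n
        have h2' : (1:ℂ) + q ^ (n+1) * β ≠ 0 := by rw [mul_comm]; exact h2
        field_simp
        ring
    _ = ((∑' n, v n * (1 - q ^ n))
          - ∑' n, v n * (q ^ (n+1) * (x + y * q ^ n) / (1 + β * q ^ (n+1))))
          + ((∑' n, v n * ((1 + x * q) * q ^ n))
            + ∑' n, v n * (q ^ (2*n+1) * (y - x * (β * q)) / (1 + β * q ^ (n+1)))) := by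
        rw [Summable.tsum_add (hSφ.sub hSψ) (hS2.add hS3), Summable.tsum_sub hSφ hSψ, Summable.tsum_add hS2 hS3]
    _ = (∑' n, v n * ((1 + x * q) * q ^ n))
          + ∑' n, v n * (q ^ (2*n+1) * (y - x * (β * q)) / (1 + β * q ^ (n+1))) := by
        rw [hφψ]; ring
    _ = (1 + x * q) * G q (x * q) β (y * q)
        + (q * (y - x * (β * q)) / (1 + β * q)) * G q (x * q ^ 2) (β * q) (y * q ^ 2) := by
        congr 1
        · rw [G_eq_tsum_gt, ← tsum_mul_left]
          refine tsum_congr (fun n => ?_)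
          have h := e2b q x β y 1 n
          rw [pow_one] at h
          rw [h]; ring
        · rw [G_eq_tsum_gt, ← tsum_mul_left]
          refine tsum_congr (fun n => ?_)
          have h := e2 q x β y 2 n
          rw [h]
          have he1 := e1 q x β y hq hβ n
          have h2 := hβn n
          have h2' : (1:ℂ) + q ^ (n+1) * β ≠ 0 := by rw [mul_comm]; exact h2
          field_simp
          linear_combination (q * (y - x * (β * q)) * (q ^ 2) ^ n) * he1

end star

noncomputable def Cb (b q : ℂ) (m : ℕ) : ℂ := ∏ j ∈ Finset.range m, (1 + b * q ^ (j + 1))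

noncomputable def wseq (a b l q : ℂ) (n : ℕ) : ℂ :=
  G q (a * q ^ n) (b * q ^ (n / 2)) (l * q ^ n) / Cb b q (n / 2)

noncomputable def aseqF (a b l q : ℂ) : ℕ → ℂ := fun m =>
  if m % 2 = 1 then l * q ^ m - a * b * q ^ (3 * ((m + 1) / 2) - 1)
  else b * q ^ (m / 2) + l * q ^ m

section wrec
variable (a b l q : ℂ)

lemma aseq_odd (m : ℕ) : aseqF a b l q (2*m+1) = l * q ^ (2*m+1) - a * b * q ^ (3*m+2) := by
  have h1 : (2*m+1) % 2 = 1 := by omega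
  have h2 : 3 * ((2*m+1+1)/2) - 1 = 3*m+2 := by omega
  rw [aseqF]
  simp only [h1, if_true, h2]

lemma aseq_even (m : ℕ) : aseqF a b l q (2*m+2) = b * q ^ (m+1) + l * q ^ (2*m+2) := by
  have h1 : (2*m+2) % 2 = 0 := by omega
  have h2 : (2*m+2)/2 = m+1 := by omega
  rw [aseqF]
  simp only [h1, h2]
  norm_num

variable (hq : ‖q‖ < 1) (hb : ∀ j : ℕ, 1 ≤ j → 1 + b * q ^ j ≠ 0)

lemma hbm (hb : ∀ j : ℕ, 1 ≤ j → 1 + b * q ^ j ≠ 0) (m : ℕ) :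
    ∀ j : ℕ, 1 ≤ j → 1 + (b * q ^ m) * q ^ j ≠ 0 := by
  intro j hj
  have h := hb (m + j) (by omega)
  have he : b * q ^ (m + j) = (b * q ^ m) * q ^ j := by rw [pow_add]; ring
  rwa [he] at h

lemma Cb_ne' (hb : ∀ j : ℕ, 1 ≤ j → 1 + b * q ^ j ≠ 0) (m : ℕ) : Cb b q m ≠ 0 :=
  Finset.prod_ne_zero_iff.mpr (fun j _ => hb (j+1) (by omega))

lemma Cb_succ (m : ℕ) : Cb b q (m+1) = Cb b q m * (1 + b * q ^ (m+1)) :=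
  Finset.prod_range_succ _ m

lemma wrec (hq : ‖q‖ < 1) (hb : ∀ j : ℕ, 1 ≤ j → 1 + b * q ^ j ≠ 0) (n : ℕ) :
    wseq a b l q n = (1 + a * q ^ (n+1)) * wseq a b l q (n+1)
      + aseqF a b l q (n+1) * wseq a b l q (n+2) := by
  have hCne := Cb_ne' b q hb
  obtain ⟨m, hm | hm⟩ := Nat.even_or_odd' n <;> subst hm
  · -- even case n = 2m, use star1
    have i1 : (2*m)/2 = m := by omega
    have i2 : (2*m+1)/2 = m := by omega
    have i3 : (2*m+2)/2 = m+1 := by omega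
    rw [aseq_odd, wseq, wseq, wseq, i1, i2, i3]
    have hstar := star1 q (a * q ^ (2*m)) (b * q ^ m) (l * q ^ (2*m)) hq (hbm b q hb m)
    rw [show a * q ^ (2*m) * q = a * q ^ (2*m+1) by ring,
        show l * q ^ (2*m) * q = l * q ^ (2*m+1) by ring,
        show a * q ^ (2*m) * q ^ 2 = a * q ^ (2*m+2) by ring,
        show l * q ^ (2*m) * q ^ 2 = l * q ^ (2*m+2) by ring,
        show (b * q ^ m) * q = b * q ^ (m+1) by ring] at hstar
    rw [hstar, Cb_succ]
    have h1 : (1:ℂ) + b * q ^ (m+1) ≠ 0 := hb (m+1) (by omega)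
    have h2 := hCne m
    field_simp
    ring
  · -- odd case n = 2m+1, use star2
    have i1 : (2*m+1)/2 = m := by omega
    have i2 : (2*m+1+1)/2 = m+1 := by omega
    have i3 : (2*m+1+2)/2 = m+1 := by omega
    have e1 : (2*m+1)+1 = 2*m+2 := by omega
    have e2 : (2*m+1)+2 = 2*m+3 := by omega
    rw [e1, e2] at *
    rw [aseq_even, wseq, wseq, wseq, i1]
    rw [show (2*m+2)/2 = m+1 by omega, show (2*m+3)/2 = m+1 by omega]
    have hstar := star2 q (a * q ^ (2*m+1)) (b * q ^ m) (l * q ^ (2*m+1)) hq (hbm b q hb m)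
    rw [show a * q ^ (2*m+1) * q = a * q ^ (2*m+2) by ring,
        show l * q ^ (2*m+1) * q = l * q ^ (2*m+2) by ring,
        show a * q ^ (2*m+1) * q ^ 2 = a * q ^ (2*m+3) by ring,
        show l * q ^ (2*m+1) * q ^ 2 = l * q ^ (2*m+3) by ring,
        show (b * q ^ m) * q = b * q ^ (m+1) by ring] at hstar
    rw [Cb_succ]
    have h1 : (1:ℂ) + b * q ^ (m+1) ≠ 0 := hb (m+1) (by omega)
    have h2 := hCne m
    have hcoef : q * (b * q ^ m + l * q ^ (2*m+1)) = b * q ^ (m+1) + l * q ^ (2*m+2) := by ring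
    rw [hcoef] at hstar
    have h1' : (1:ℂ) + q ^ (m+1) * b ≠ 0 := by rw [mul_comm]; exact h1
    generalize G q (a * q ^ (2*m+1)) (b * q ^ m) (l * q ^ (2*m+1)) = G1 at hstar ⊢
    generalize G q (a * q ^ (2*m+2)) (b * q ^ (m+1)) (l * q ^ (2*m+2)) = G2 at hstar ⊢
    generalize G q (a * q ^ (2*m+3)) (b * q ^ (m+1)) (l * q ^ (2*m+3)) = G3 at hstar ⊢
    field_simp
    linear_combination hstar

end wrec

section cf
variable (as bs : ℕ → ℂ)

lemma cfNum_succ (n : ℕ) : cfNum as bs (n+2)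
    = bs (n+1) * cfNum as bs (n+1) + as (n+1) * cfNum as bs n := rfl
lemma cfDen_succ (n : ℕ) : cfDen as bs (n+2)
    = bs (n+1) * cfDen as bs (n+1) + as (n+1) * cfDen as bs n := rfl

noncomputable def cfD (n : ℕ) : ℂ :=
  cfNum as bs (n+1) * cfDen as bs n - cfNum as bs n * cfDen as bs (n+1)

lemma cfD_zero : cfD as bs 0 = -1 := by simp [cfD, cfNum, cfDen]

lemma cfD_succ (n : ℕ) : cfD as bs (n+1) = -(as (n+1)) * cfD as bs n := by
  rw [cfD, cfD, cfNum_succ, cfDen_succ]; ring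

variable (w : ℕ → ℂ) (hw : ∀ n, w n = bs n * w (n+1) + as (n+1) * w (n+2))

lemma cf_w (hw : ∀ n, w n = bs n * w (n+1) + as (n+1) * w (n+2)) : ∀ n : ℕ,
    w 0 = cfNum as bs (n+1) * w (n+1) + cfNum as bs n * (as (n+1) * w (n+2))
    ∧ w 1 = cfDen as bs (n+1) * w (n+1) + cfDen as bs n * (as (n+1) * w (n+2)) := by
  intro n
  induction n with
  | zero =>
    constructor
    · show w 0 = bs 0 * w 1 + 1 * (as 1 * w 2)
      rw [one_mul]; exact hw 0
    · show w 1 = 1 * w 1 + 0 * (as 1 * w 2)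
      ring
  | succ n ih =>
    obtain ⟨ih1, ih2⟩ := ih
    have hrec := hw (n+1)
    constructor
    · rw [cfNum_succ, ih1, hrec]; ring
    · rw [cfDen_succ, ih2, hrec]; ring

lemma cf_err (hw : ∀ n, w n = bs n * w (n+1) + as (n+1) * w (n+2)) (n : ℕ) :
    cfNum as bs (n+1) * w 1 - cfDen as bs (n+1) * w 0
      = as (n+1) * w (n+2) * cfD as bs n := by
  obtain ⟨h1, h2⟩ := cf_w as bs w hw n
  rw [h1, h2, cfD]; ring

end cf

section bounds
variable (as bs : ℕ → ℂ) (r C0 A : ℝ)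
variable (hr0 : 0 ≤ r) (hr : r < 1) (hC0 : 0 ≤ C0) (hA : 0 ≤ A)
variable (has : ∀ k, 1 ≤ k → ‖as k‖ ≤ C0 * r ^ k)
variable (hbs : ∀ k, ‖bs k‖ ≤ 1 + A * r ^ (k+1))

lemma cfD_bound (hr0 : 0 ≤ r) (hC0 : 0 ≤ C0)
    (has : ∀ k, 1 ≤ k → ‖as k‖ ≤ C0 * r ^ k) (n : ℕ) :
    ‖cfD as bs n‖ ≤ C0 ^ n * r ^ (n * (n+1) / 2) := by
  induction n with
  | zero => rw [cfD_zero]; simp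
  | succ n ih =>
    rw [cfD_succ, norm_mul, norm_neg]
    calc ‖as (n+1)‖ * ‖cfD as bs n‖ ≤ (C0 * r ^ (n+1)) * (C0 ^ n * r ^ (n * (n+1) / 2)) := by
          apply mul_le_mul (has (n+1) (by omega)) ih (norm_nonneg _) (by positivity)
      _ = C0 ^ (n+1) * r ^ ((n+1) * (n+2) / 2) := by
          rw [Tsucc, pow_add, pow_succ]; ring

lemma cfDen_bound (hr0 : 0 ≤ r) (hr : r < 1) (hC0 : 0 ≤ C0) (hA : 0 ≤ A)
    (has : ∀ k, 1 ≤ k → ‖as k‖ ≤ C0 * r ^ k)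
    (hbs : ∀ k, ‖bs k‖ ≤ 1 + A * r ^ (k+1)) :
    ∃ Ω : ℝ, 0 < Ω ∧ ∀ n, ‖cfDen as bs n‖ ≤ Ω := by
  set t : ℕ → ℝ := fun k => (A + C0) * r ^ (k+1) with ht
  have ht0 : ∀ k, 0 ≤ t k := fun k => by positivity
  set Pd : ℕ → ℝ := fun n => ∏ k ∈ Finset.range n, (1 + t k) with hPd
  have hPd0 : ∀ n, 0 < Pd n := fun n => Finset.prod_pos (fun k _ => by
    have := ht0 k; linarith)
  have claim : ∀ n, ‖cfDen as bs (n+1)‖ ≤ Pd n ∧ ‖cfDen as bs n‖ ≤ Pd n := by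
    intro n
    induction n with
    | zero =>
      constructor
      · show ‖(1:ℂ)‖ ≤ Pd 0
        simp [hPd]
      · show ‖(0:ℂ)‖ ≤ Pd 0
        simp [hPd]
    | succ n ih =>
      obtain ⟨ih1, ih2⟩ := ih
      have hPsucc : Pd (n+1) = Pd n * (1 + t n) := Finset.prod_range_succ _ n
      have hge : Pd n ≤ Pd (n+1) := by
        rw [hPsucc]
        nlinarith [hPd0 n, ht0 n]
      constructor
      · show ‖bs (n+1) * cfDen as bs (n+1) + as (n+1) * cfDen as bs n‖ ≤ Pd (n+1)
        calc ‖bs (n+1) * cfDen as bs (n+1) + as (n+1) * cfDen as bs n‖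
            ≤ ‖bs (n+1)‖ * ‖cfDen as bs (n+1)‖ + ‖as (n+1)‖ * ‖cfDen as bs n‖ := by
              calc _ ≤ ‖bs (n+1) * cfDen as bs (n+1)‖ + ‖as (n+1) * cfDen as bs n‖ :=
                    norm_add_le _ _
                _ = _ := by rw [norm_mul, norm_mul]
          _ ≤ (1 + A * r ^ (n+2)) * Pd n + (C0 * r ^ (n+1)) * Pd n := by
              apply add_le_add
              · apply mul_le_mul (hbs (n+1)) ih1 (norm_nonneg _) (by positivity)
              · apply mul_le_mul (has (n+1) (by omega)) ih2 (norm_nonneg _) (by positivity)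
          _ ≤ (1 + t n) * Pd n := by
              have hrr : r ^ (n+2) ≤ r ^ (n+1) :=
                pow_le_pow_of_le_one hr0 hr.le (by omega)
              have : A * r ^ (n+2) + C0 * r ^ (n+1) ≤ t n := by
                have htn : t n = (A + C0) * r ^ (n+1) := rfl
                rw [htn]; nlinarith
              nlinarith [hPd0 n]
          _ = Pd (n+1) := by rw [hPsucc]; ring
      · exact ih1.trans hge
  have hPdle : ∀ n, Pd n ≤ Real.exp ((A + C0) * (1 - r)⁻¹) := by
    intro n
    calc Pd n ≤ ∏ k ∈ Finset.range n, Real.exp (t k) := by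
          apply Finset.prod_le_prod (fun k _ => by have := ht0 k; linarith)
          intro k _
          have := Real.add_one_le_exp (t k)
          linarith
      _ = Real.exp (∑ k ∈ Finset.range n, t k) := (Real.exp_sum _ _).symm
      _ ≤ Real.exp ((A + C0) * (1 - r)⁻¹) := by
          apply Real.exp_le_exp.mpr
          calc ∑ k ∈ Finset.range n, t k = (A + C0) * ∑ k ∈ Finset.range n, r ^ (k+1) := by
                rw [Finset.mul_sum]
            _ ≤ (A + C0) * (1 - r)⁻¹ := by
                apply mul_le_mul_of_nonneg_left _ (by positivity)
                calc ∑ k ∈ Finset.range n, r ^ (k+1) ≤ ∑ k ∈ Finset.range (n+1), r ^ k := by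
                      rw [Finset.sum_range_succ' (fun k => r ^ k) n]
                      have h0 : (0:ℝ) ≤ r ^ 0 := by positivity
                      have heq : ∀ k ∈ Finset.range n, r ^ (k+1) = r ^ (k+1) := fun _ _ => rfl
                      simp only [pow_zero]
                      linarith
                  _ ≤ ∑' k : ℕ, r ^ k :=
                      Summable.sum_le_tsum _ (fun k _ => by positivity)
                        (summable_geometric_of_lt_one hr0 hr)
                  _ = (1 - r)⁻¹ := tsum_geometric_of_lt_one hr0 hr
  refine ⟨Real.exp ((A + C0) * (1 - r)⁻¹), Real.exp_pos _, fun n => ?_⟩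
  match n with
  | 0 => calc ‖cfDen as bs 0‖ ≤ Pd 0 := (claim 0).2
      _ ≤ _ := hPdle 0
  | (n+1) => calc ‖cfDen as bs (n+1)‖ ≤ Pd n := (claim n).1
      _ ≤ _ := hPdle n

end bounds

theorem stmt2 (a b l q : ℂ) (hq : ‖q‖ < 1)
    (hb : ∀ j : ℕ, 1 ≤ j → 1 + b * q ^ j ≠ 0)
    (hG : G q (a * q) b (l * q) ≠ 0) :
    CFConvergesTo
      (fun m => if m % 2 = 1 then l * q ^ m - a * b * q ^ (3 * ((m + 1) / 2) - 1)
        else b * q ^ (m / 2) + l * q ^ m)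
      (fun m => 1 + a * q ^ (m + 1))
      (G q a b l / G q (a * q) b (l * q)) := by
  have hqn : ‖q‖ < 1 := hq
  have hq0 : (0:ℝ) ≤ ‖q‖ := norm_nonneg q
  have hq1 : ∀ k : ℕ, ‖q‖ ^ k ≤ 1 := fun k => pow_le_one₀ hq0 hqn.le
  set as : ℕ → ℂ := aseqF a b l q with has_def
  set bs : ℕ → ℂ := fun m => 1 + a * q ^ (m + 1) with hbs_def
  set w : ℕ → ℂ := wseq a b l q with hw_def
  -- sqrt machinery
  set r : ℝ := Real.sqrt ‖q‖ with hr_def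
  have hr0 : 0 ≤ r := Real.sqrt_nonneg _
  have hqr : ‖q‖ = r ^ 2 := (Real.sq_sqrt hq0).symm
  have hr1 : r < 1 := by
    rw [hr_def]
    rw [show (1:ℝ) = Real.sqrt 1 by simp]
    exact Real.sqrt_lt_sqrt hq0 hqn
  have hqle : ∀ (e k : ℕ), k ≤ 2*e → ‖q‖ ^ e ≤ r ^ k := by
    intro e k hk
    rw [hqr, ← pow_mul]
    exact pow_le_pow_of_le_one hr0 hr1.le hk
  -- bound on as
  set C0 : ℝ := ‖l‖ + ‖a‖ * ‖b‖ + ‖b‖ with hC0_def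
  have hC0 : 0 ≤ C0 := by positivity
  have has : ∀ k, 1 ≤ k → ‖as k‖ ≤ C0 * r ^ k := by
    intro k hk
    have hrk : (0:ℝ) ≤ r ^ k := by positivity
    obtain ⟨m, hm | hm⟩ := Nat.even_or_odd' k <;> subst hm
    · -- even k = 2m
      have hval : as (2*m) = b * q ^ m + l * q ^ (2*m) := by
        rw [has_def, aseqF]
        have h1 : (2*m) % 2 = 0 := by omega
        have h2 : (2*m)/2 = m := by omega
        simp only [h1, h2]
        norm_num
      rw [hval]
      have e1 : ‖q‖ ^ m ≤ r ^ (2*m) := hqle m (2*m) (by omega)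
      have e2 : ‖q‖ ^ (2*m) ≤ r ^ (2*m) := hqle (2*m) (2*m) (by omega)
      calc ‖b * q ^ m + l * q ^ (2*m)‖ ≤ ‖b * q ^ m‖ + ‖l * q ^ (2*m)‖ := norm_add_le _ _
        _ = ‖b‖ * ‖q‖ ^ m + ‖l‖ * ‖q‖ ^ (2*m) := by rw [norm_mul, norm_mul, norm_pow, norm_pow]
        _ ≤ ‖b‖ * r ^ (2*m) + ‖l‖ * r ^ (2*m) := by
            apply add_le_add <;> apply mul_le_mul_of_nonneg_left (by assumption) (norm_nonneg _)
        _ ≤ C0 * r ^ (2*m) := by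
            rw [hC0_def]
            nlinarith [mul_nonneg (mul_nonneg (norm_nonneg a) (norm_nonneg b)) (pow_nonneg hr0 (2*m))]
    · -- odd k = 2m+1
      have hval := aseq_odd a b l q m
      rw [has_def, hval]
      have e1 : ‖q‖ ^ (2*m+1) ≤ r ^ (2*m+1) := hqle (2*m+1) (2*m+1) (by omega)
      have e2 : ‖q‖ ^ (3*m+2) ≤ r ^ (2*m+1) := hqle (3*m+2) (2*m+1) (by omega)
      calc ‖l * q ^ (2*m+1) - a * b * q ^ (3*m+2)‖
          ≤ ‖l * q ^ (2*m+1)‖ + ‖a * b * q ^ (3*m+2)‖ := norm_sub_le _ _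
        _ = ‖l‖ * ‖q‖ ^ (2*m+1) + ‖a‖ * ‖b‖ * ‖q‖ ^ (3*m+2) := by
            rw [norm_mul, norm_mul, norm_mul, norm_pow, norm_pow]
        _ ≤ ‖l‖ * r ^ (2*m+1) + ‖a‖ * ‖b‖ * r ^ (2*m+1) := by
            apply add_le_add
            · exact mul_le_mul_of_nonneg_left e1 (norm_nonneg _)
            · exact mul_le_mul_of_nonneg_left e2 (by positivity)
        _ ≤ C0 * r ^ (2*m+1) := by
            rw [hC0_def]
            nlinarith [norm_nonneg b, pow_nonneg hr0 (2*m+1)]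
  -- bound on bs
  have hbs : ∀ k : ℕ, ‖bs k‖ ≤ 1 + ‖a‖ * r ^ (k+1) := by
    intro k
    have e1 : ‖q‖ ^ (k+1) ≤ r ^ (k+1) := hqle (k+1) (k+1) (by omega)
    calc ‖bs k‖ ≤ ‖(1:ℂ)‖ + ‖a * q ^ (k+1)‖ := norm_add_le _ _
      _ = 1 + ‖a‖ * ‖q‖ ^ (k+1) := by rw [norm_one, norm_mul, norm_pow]
      _ ≤ 1 + ‖a‖ * r ^ (k+1) := by
          have := mul_le_mul_of_nonneg_left e1 (norm_nonneg a)
          linarith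
  -- bound on w
  obtain ⟨c, hc0, hc⟩ := prod_lb q b hqn hb
  set S : ℝ := ∑' n : ℕ, ((‖a‖ + ‖l‖) / (1 - ‖q‖)) ^ n * ‖q‖ ^ (n * (n+1) / 2) with hS_def
  have hS0 : 0 ≤ S := tsum_nonneg (fun n => by
    have : (0:ℝ) < 1 - ‖q‖ := by linarith
    positivity)
  set W : ℝ := max (c⁻¹ * S * c⁻¹) 1 with hW_def
  have hW0 : 0 < W := lt_of_lt_of_le one_pos (le_max_right _ _)
  have hWw : ∀ n, ‖w n‖ ≤ W := by
    intro n
    have hcβ : ∀ k, c ≤ ‖∏ j ∈ Finset.range k, (1 + (b * q ^ (n/2)) * q ^ (j + 1))‖ := by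
      intro k
      calc c ≤ ‖∏ j ∈ Finset.range k, (1 + b * q ^ ((n/2) + j + 1))‖ := hc (n/2) k
        _ = _ := by
            congr 1
            refine Finset.prod_congr rfl (fun j _ => ?_)
            rw [show (n/2) + j + 1 = (n/2) + (j+1) by omega, pow_add]
            ring
    have hX : ‖a * q ^ n‖ ≤ ‖a‖ := by
      rw [norm_mul, norm_pow]
      nlinarith [hq1 n, norm_nonneg a, pow_nonneg hq0 n]
    have hY : ‖l * q ^ n‖ ≤ ‖l‖ := by
      rw [norm_mul, norm_pow]
      nlinarith [hq1 n, norm_nonneg l, pow_nonneg hq0 n]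
    have hGb := norm_G_le q (a * q ^ n) (b * q ^ (n/2)) (l * q ^ n) hqn hc0 hcβ hX hY
    have hCb : c ≤ ‖Cb b q (n/2)‖ := by
      rw [Cb]
      calc c ≤ ‖∏ j ∈ Finset.range (n/2), (1 + b * q ^ (0 + j + 1))‖ := hc 0 (n/2)
        _ = _ := by
            congr 1
            exact Finset.prod_congr rfl (fun j _ => by rw [show 0 + j + 1 = j + 1 by omega])
    calc ‖w n‖ = ‖G q (a * q ^ n) (b * q ^ (n/2)) (l * q ^ n)‖ / ‖Cb b q (n/2)‖ := by
          rw [hw_def, wseq, norm_div]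
      _ ≤ (c⁻¹ * S) / c := by
          apply div_le_div₀ (by positivity) hGb hc0 hCb
      _ = c⁻¹ * S * c⁻¹ := by rw [div_eq_mul_inv]
      _ ≤ W := le_max_left _ _
  -- w recurrence in cf form
  have hwrec : ∀ n, w n = bs n * w (n+1) + as (n+1) * w (n+2) := fun n =>
    wrec a b l q hqn hb n
  -- w0 w1 values
  have hw0 : w 0 = G q a b l := by
    rw [hw_def, wseq]
    norm_num [Cb]
  have hw1 : w 1 = G q (a * q) b (l * q) := by
    rw [hw_def, wseq]
    norm_num [Cb]
  have hw1ne : w 1 ≠ 0 := by rw [hw1]; exact hG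
  have hw1pos : 0 < ‖w 1‖ := norm_pos_iff.mpr hw1ne
  -- denominator bounds
  obtain ⟨Ω, hΩ0, hΩ⟩ := cfDen_bound as bs r C0 ‖a‖ hr0 hr1 hC0 (norm_nonneg a) has hbs
  -- as (n+1) tends to zero like C0 r^{n+1}
  have hasz : Tendsto (fun n : ℕ => Ω * W * (C0 * r ^ (n+1))) atTop (nhds 0) := by
    have h1 : Tendsto (fun n : ℕ => r ^ (n+1)) atTop (nhds 0) :=
      (tendsto_pow_atTop_nhds_zero_of_lt_one hr0 hr1).comp (tendsto_add_atTop_nat 1)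
    have := (h1.const_mul C0).const_mul (Ω * W)
    simpa [mul_assoc] using this
  set δ : ℝ := ‖w 1‖ / (2 * W) with hδ_def
  have hδ0 : 0 < δ := by positivity
  have hDlow : ∀ᶠ n : ℕ in atTop, δ ≤ ‖cfDen as bs (n+1)‖ := by
    filter_upwards [hasz.eventually (eventually_le_nhds (by positivity : (0:ℝ) < ‖w 1‖ / 2))]
      with n hn
    have hrel := (cf_w as bs w hwrec n).2
    have h1 : ‖w 1‖ ≤ ‖cfDen as bs (n+1)‖ * W + Ω * ‖as (n+1)‖ * W := by
      calc ‖w 1‖ ≤ ‖cfDen as bs (n+1) * w (n+1)‖ + ‖cfDen as bs n * (as (n+1) * w (n+2))‖ := by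
            rw [hrel]; exact norm_add_le _ _
        _ = ‖cfDen as bs (n+1)‖ * ‖w (n+1)‖ + ‖cfDen as bs n‖ * (‖as (n+1)‖ * ‖w (n+2)‖) := by
            rw [norm_mul, norm_mul, norm_mul]
        _ ≤ ‖cfDen as bs (n+1)‖ * W + Ω * ‖as (n+1)‖ * W := by
            apply add_le_add
            · exact mul_le_mul_of_nonneg_left (hWw (n+1)) (norm_nonneg _)
            · calc ‖cfDen as bs n‖ * (‖as (n+1)‖ * ‖w (n+2)‖)
                  ≤ Ω * (‖as (n+1)‖ * W) := by
                    apply mul_le_mul (hΩ n) _ (by positivity) hΩ0.le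
                    exact mul_le_mul_of_nonneg_left (hWw (n+2)) (norm_nonneg _)
                _ = Ω * ‖as (n+1)‖ * W := by ring
    have h2 : Ω * ‖as (n+1)‖ * W ≤ ‖w 1‖ / 2 := by
      calc Ω * ‖as (n+1)‖ * W ≤ Ω * (C0 * r ^ (n+1)) * W := by
            apply mul_le_mul_of_nonneg_right _ hW0.le
            exact mul_le_mul_of_nonneg_left (has (n+1) (by omega)) hΩ0.le
        _ = Ω * W * (C0 * r ^ (n+1)) := by ring
        _ ≤ ‖w 1‖ / 2 := hn
    have h3 : ‖w 1‖ / 2 ≤ ‖cfDen as bs (n+1)‖ * W := by linarith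
    rw [hδ_def, div_le_iff₀ (by positivity : (0:ℝ) < 2 * W)]
    calc ‖w 1‖ ≤ ‖cfDen as bs (n+1)‖ * W * 2 := by linarith
      _ = ‖cfDen as bs (n+1)‖ * (2 * W) := by ring
  -- the limit
  show Tendsto (fun n => cfNum as bs (n+1) / cfDen as bs (n+1)) atTop
    (nhds (G q a b l / G q (a * q) b (l * q)))
  rw [← hw0, ← hw1]
  rw [← tendsto_sub_nhds_zero_iff]
  apply squeeze_zero_norm' (a := fun n =>
    (C0 ^ (n+1) * r ^ ((n+1) * (n+2) / 2)) * (W / (δ * ‖w 1‖)))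
  · filter_upwards [hDlow] with n hD
    have hDne : cfDen as bs (n+1) ≠ 0 := by
      intro h; rw [h] at hD; simp at hD; linarith
    have herr := cf_err as bs w hwrec n
    have heq : cfNum as bs (n+1) / cfDen as bs (n+1) - w 0 / w 1
        = (as (n+1) * w (n+2) * cfD as bs n) / (cfDen as bs (n+1) * w 1) := by
      rw [div_sub_div _ _ hDne hw1ne, herr]
    rw [heq, norm_div]
    have hnum : ‖as (n+1) * w (n+2) * cfD as bs n‖
        ≤ (C0 ^ (n+1) * r ^ ((n+1) * (n+2) / 2)) * W := by
      have h1 : ‖as (n+1) * cfD as bs n‖ ≤ C0 ^ (n+1) * r ^ ((n+1) * (n+2) / 2) := by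
        have h2 := cfD_bound as bs r C0 hr0 hC0 has (n+1)
        rw [cfD_succ, norm_mul, norm_neg] at h2
        rwa [norm_mul]
      calc ‖as (n+1) * w (n+2) * cfD as bs n‖
          = ‖as (n+1) * cfD as bs n‖ * ‖w (n+2)‖ := by
            rw [← norm_mul]; congr 1; ring
        _ ≤ (C0 ^ (n+1) * r ^ ((n+1) * (n+2) / 2)) * W := by
            apply mul_le_mul h1 (hWw (n+2)) (norm_nonneg _) (by positivity)
    have hden : δ * ‖w 1‖ ≤ ‖cfDen as bs (n+1) * w 1‖ := by
      rw [norm_mul]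
      exact mul_le_mul_of_nonneg_right hD (norm_nonneg _)
    calc ‖as (n+1) * w (n+2) * cfD as bs n‖ / ‖cfDen as bs (n+1) * w 1‖
        ≤ ((C0 ^ (n+1) * r ^ ((n+1) * (n+2) / 2)) * W) / (δ * ‖w 1‖) := by
          apply div_le_div₀ (by positivity) hnum (by positivity) hden
      _ = (C0 ^ (n+1) * r ^ ((n+1) * (n+2) / 2)) * (W / (δ * ‖w 1‖)) := by
          rw [mul_div_assoc]
  · have h1 : Tendsto (fun n : ℕ => C0 ^ n * r ^ (n * (n+1) / 2)) atTop (nhds 0) :=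
      (sumK hr0 hr1 C0 hC0).tendsto_atTop_zero
    have h2 : Tendsto (fun n : ℕ => C0 ^ (n+1) * r ^ ((n+1) * (n+2) / 2)) atTop (nhds 0) :=
      h1.comp (tendsto_add_atTop_nat 1)
    have := h2.mul_const (W / (δ * ‖w 1‖))
    simpa using this
end
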